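/- arXiv:2109.04106 — 7 statements merged into one kernel-verified Lean document; each statement's English description precedes it below -/
import Mathlib

section
/- Let (Ω, 𝒜, ℙ) be a probability space, let (Z_n)_{n≥1} be a sequence of nonnegative real random variables each having finite moments of all positive integer orders, and let z ≥ 0 be a real number. If for every positive integer p one has E[Z_n^p] → z^p as n → ∞, then for every real p ∈ (0, ∞) one has E[|Z_n − z|^p] → 0 as n → ∞, i.e. Z_n converges to the constant z in L_p for every p ∈ (0, ∞). -/
/-!
For an even integer `m`, `|Z n - z| ^ m = (Z n - z) ^ m`, and expanding binomially writes
`E[(Z n - z) ^ m]` as a fixed linear combination of the moments `E[Z n ^ j]`, `j ≤ m`; these tend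
to `z ^ j`, so the combination tends to `(z - z) ^ m = 0`. Thus `Z n → z` in `L_m` for every even
`m`, and on a probability space the `L_p` seminorm increases with `p`, which covers every
`p ≤ m`.
-/

open MeasureTheory Filter Topology

section
variable {α : Type*} [MeasurableSpace α] {μ : Measure α}

theorem lintegral_ofReal_abs_rpow_eq_eLpNorm_rpow (f : α → ℝ) {p : ℝ} (hp : 0 < p) :
    ∫⁻ a, ENNReal.ofReal (|f a| ^ p) ∂μ = eLpNorm f (ENNReal.ofReal p) μ ^ p := by
  rw [eLpNorm_eq_eLpNorm' (by simpa using hp) ENNReal.ofReal_ne_top, ENNReal.toReal_ofReal hp.le,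
    ← lintegral_rpow_enorm_eq_rpow_eLpNorm' hp]
  simp_rw [Real.enorm_eq_ofReal_abs, ENNReal.ofReal_rpow_of_nonneg (abs_nonneg _) hp.le]

theorem tendsto_lintegral_ofReal_abs_rpow_nhds_zero_iff {ι : Type*} {l : Filter ι}
    {f : ι → α → ℝ} {p : ℝ} (hp : 0 < p) :
    Tendsto (fun i => ∫⁻ a, ENNReal.ofReal (|f i a| ^ p) ∂μ) l (𝓝 0) ↔
      Tendsto (fun i => eLpNorm (f i) (ENNReal.ofReal p) μ) l (𝓝 0) := by
  simp_rw [lintegral_ofReal_abs_rpow_eq_eLpNorm_rpow _ hp]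
  have h := (ENNReal.orderIsoRpow p hp).toHomeomorph.isInducing.tendsto_nhds_iff
    (f := fun i => eLpNorm (f i) (ENNReal.ofReal p) μ) (l := l) (y := 0)
  simpa [Function.comp_def, ENNReal.zero_rpow_of_pos hp] using h.symm

theorem lintegral_ofReal_abs_pow_eq_ofReal_integral_pow {f : α → ℝ} {m : ℕ} (hm : Even m)
    (hf : Integrable (fun a => f a ^ m) μ) :
    ∫⁻ a, ENNReal.ofReal (|f a| ^ (m : ℝ)) ∂μ = ENNReal.ofReal (∫ a, f a ^ m ∂μ) := by
  rw [ofReal_integral_eq_lintegral_ofReal hf (ae_of_all _ fun a => hm.pow_nonneg _)]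
  simp_rw [Real.rpow_natCast, hm.pow_abs]

variable {X : α → ℝ} {m : ℕ}

theorem integrable_add_pow_summand (hX : ∀ j ≤ m, Integrable (fun a => X a ^ j) μ) (c : ℝ)
    {j : ℕ} (hj : j ∈ Finset.range (m + 1)) :
    Integrable (fun a => X a ^ j * c ^ (m - j) * m.choose j) μ :=
  ((hX j (Finset.mem_range_succ_iff.mp hj)).mul_const _).mul_const _

theorem integrable_sub_const_pow (hX : ∀ j ≤ m, Integrable (fun a => X a ^ j) μ) (c : ℝ) :
    Integrable (fun a => (X a - c) ^ m) μ := by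
  simp_rw [sub_eq_add_neg, add_pow]
  exact integrable_finsetSum _ fun j hj => integrable_add_pow_summand hX (-c) hj

theorem integral_sub_const_pow (hX : ∀ j ≤ m, Integrable (fun a => X a ^ j) μ) (c : ℝ) :
    ∫ a, (X a - c) ^ m ∂μ =
      ∑ j ∈ Finset.range (m + 1), (∫ a, X a ^ j ∂μ) * (-c) ^ (m - j) * m.choose j := by
  simp_rw [sub_eq_add_neg, add_pow]
  rw [integral_finsetSum _ fun j hj => integrable_add_pow_summand hX (-c) hj]
  simp_rw [integral_mul_const]

theorem tendsto_integral_sub_const_pow_nhds_zero [IsProbabilityMeasure μ] {ι : Type*}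
    {l : Filter ι} {X : ι → α → ℝ} {c : ℝ} (hm : 0 < m)
    (hint : ∀ i, ∀ j ≤ m, Integrable (fun a => X i a ^ j) μ)
    (hmom : ∀ j, 0 < j → j ≤ m → Tendsto (fun i => ∫ a, X i a ^ j ∂μ) l (𝓝 (c ^ j))) :
    Tendsto (fun i => ∫ a, (X i a - c) ^ m ∂μ) l (𝓝 0) := by
  have hlim : Tendsto (fun i => ∑ j ∈ Finset.range (m + 1),
      (∫ a, X i a ^ j ∂μ) * (-c) ^ (m - j) * m.choose j) l (𝓝 ((c + -c) ^ m)) := by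
    rw [add_pow]
    refine tendsto_finsetSum _ fun j hj => ((?_ : Tendsto _ _ _).mul_const _).mul_const _
    rcases j.eq_zero_or_pos with rfl | hj0
    · simpa using tendsto_const_nhds
    · exact hmom j hj0 (Finset.mem_range_succ_iff.mp hj)
  rw [add_neg_cancel, zero_pow hm.ne'] at hlim
  exact hlim.congr fun i => (integral_sub_const_pow (hint i) c).symm

end

theorem moment_convergence_implies_Lp_convergence_general
    {Ω : Type*} [MeasurableSpace Ω] (P : Measure Ω) [IsProbabilityMeasure P]
    (Z : ℕ → Ω → ℝ) (hZmeas : ∀ n, Measurable (Z n))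
    (hZmom : ∀ (n : ℕ) (p : ℕ), 0 < p → Integrable (fun ω => Z n ω ^ p) P)
    (z : ℝ)
    (hconv : ∀ p : ℕ, 0 < p →
      Tendsto (fun n => ∫ ω, Z n ω ^ p ∂P) atTop (nhds (z ^ p))) :
    ∀ p : ℝ, 0 < p →
      Tendsto (fun n => ∫⁻ ω, ENNReal.ofReal (|Z n ω - z| ^ p) ∂P) atTop (nhds 0) := by
  intro p hp
  set m := 2 * ⌈p⌉₊
  have hm : 0 < m := by simp [m, hp]
  have hpm : p ≤ m := by
    have := Nat.le_ceil p
    push_cast [m]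
    linarith
  have hZpow : ∀ n, ∀ j ≤ m, Integrable (fun ω => Z n ω ^ j) P := fun n j _ =>
    j.eq_zero_or_pos.elim (fun hj => by simp [hj]) (hZmom n j)
  have hcentral : Tendsto (fun n => ∫ ω, (Z n ω - z) ^ m ∂P) atTop (𝓝 0) :=
    tendsto_integral_sub_const_pow_nhds_zero hm hZpow fun j hj _ => hconv j hj
  have hLm : Tendsto (fun n => eLpNorm (fun ω => Z n ω - z) (ENNReal.ofReal m) P) atTop (𝓝 0) := by
    rw [← tendsto_lintegral_ofReal_abs_rpow_nhds_zero_iff (by positivity)]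
    have hofReal := ENNReal.tendsto_ofReal hcentral
    rw [ENNReal.ofReal_zero] at hofReal
    exact hofReal.congr fun n => (lintegral_ofReal_abs_pow_eq_ofReal_integral_pow
      (even_two_mul _) (integrable_sub_const_pow (hZpow n) z)).symm
  refine (tendsto_lintegral_ofReal_abs_rpow_nhds_zero_iff (f := fun n ω => Z n ω - z) hp).2 ?_
  exact tendsto_of_tendsto_of_tendsto_of_le_of_le tendsto_const_nhds hLm (fun _ => bot_le)
    fun n => eLpNorm_le_eLpNorm_of_exponent_le (ENNReal.ofReal_le_ofReal hpm)
      ((hZmeas n).sub measurable_const).aestronglyMeasurable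

/-- If all integer moments of the nonnegative random variables `Z n`
converge to the corresponding powers of `z ≥ 0`, then `Z n → z` in `L_p` for every
real `p ∈ (0, ∞)`. -/
theorem moment_convergence_implies_Lp_convergence
    {Ω : Type*} [MeasurableSpace Ω] (P : Measure Ω) [IsProbabilityMeasure P]
    (Z : ℕ → Ω → ℝ) (hZmeas : ∀ n, Measurable (Z n))
    (hZnonneg : ∀ n ω, 0 ≤ Z n ω)
    (hZmom : ∀ (n : ℕ) (p : ℕ), 0 < p → Integrable (fun ω => Z n ω ^ p) P)
    (z : ℝ) (hz : 0 ≤ z)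
    (hconv : ∀ p : ℕ, 0 < p →
      Tendsto (fun n => ∫ ω, Z n ω ^ p ∂P) atTop (nhds (z ^ p))) :
    ∀ p : ℝ, 0 < p →
      Tendsto (fun n => ∫⁻ ω, ENNReal.ofReal (|Z n ω - z| ^ p) ∂P) atTop (nhds 0) :=
  moment_convergence_implies_Lp_convergence_general P Z hZmeas hZmom z hconv
end

section
/- Let d be a positive integer, let (M, dist) be a compact metric space with at least two points, and let μ be a finite Borel measure on M satisfying the uniform volume-density condition: sup_{p∈M} |μ(B(p,r))/(ω_d r^d) − 1| → 0 as r → 0+. Then there exist constants c, C > 0 such that c·r^d ≤ μ(B(p,r)) ≤ C·r^d for all p ∈ M and all real r with 0 < r < diam(M). -/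
open MeasureTheory Metric

/-- The Lebesgue volume of the Euclidean unit ball in `ℝ^d`. -/
noncomputable def unitBallVol (d : ℕ) : ℝ :=
  (volume (ball (0 : EuclideanSpace ℝ (Fin d)) 1)).toReal

/-- a finite Borel measure on a compact metric space (with at least two
points) satisfying the uniform volume-density condition is Ahlfors `d`-regular. -/
theorem ahlfors_regular_of_uniform_density
    {M : Type*} [MetricSpace M] [CompactSpace M] [Nontrivial M]
    [MeasurableSpace M] [BorelSpace M]
    (d : ℕ) (hd : 0 < d)
    (μ : Measure M) [IsFiniteMeasure μ]
    (hdens : ∀ ε : ℝ, 0 < ε → ∃ r₀ : ℝ, 0 < r₀ ∧ ∀ r : ℝ, 0 < r → r < r₀ →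
      ∀ p : M, |(μ (ball p r)).toReal / (unitBallVol d * r ^ d) - 1| ≤ ε) :
    ∃ c C : ℝ, 0 < c ∧ 0 < C ∧ ∀ (p : M) (r : ℝ), 0 < r → r < diam (Set.univ : Set M) →
      c * r ^ d ≤ (μ (ball p r)).toReal ∧ (μ (ball p r)).toReal ≤ C * r ^ d := by
  set ω := unitBallVol d with hωdef
  have hω0 : 0 < ω := by
    have h1 : (0:ENNReal) < volume (ball (0 : EuclideanSpace ℝ (Fin d)) 1) :=
      measure_ball_pos _ _ one_pos
    have h2 : volume (ball (0 : EuclideanSpace ℝ (Fin d)) 1) ≠ ⊤ := measure_ball_lt_top.ne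
    exact ENNReal.toReal_pos h1.ne' h2
  obtain ⟨r₀, hr₀, H⟩ := hdens (1/2) (by norm_num)
  set D := diam (Set.univ : Set M) with hDdef
  have hD : 0 < D := by
    obtain ⟨x, y, hxy⟩ := exists_pair_ne M
    have h1 : dist x y ≤ D := dist_le_diam_of_mem isCompact_univ.isBounded trivial trivial
    have h2 : 0 < dist x y := dist_pos.2 hxy
    linarith
  set r₁ := min (r₀/2) (D/2) with hr₁def
  have hr₁0 : 0 < r₁ := lt_min (by linarith) (by linarith)
  have hr₁r₀ : r₁ < r₀ := (min_le_left _ _).trans_lt (by linarith)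
  have hfin : ∀ (p : M) (r : ℝ), μ (ball p r) ≠ ⊤ := fun p r => measure_ne_top μ _
  have key : ∀ (p : M) (r : ℝ), 0 < r → r < r₀ →
      ω/2 * r^d ≤ (μ (ball p r)).toReal ∧ (μ (ball p r)).toReal ≤ 3*ω/2 * r^d := by
    intro p r hr hrr₀
    have hpos : 0 < ω * r^d := mul_pos hω0 (pow_pos hr d)
    have h := H r hr hrr₀ p
    rw [abs_le] at h
    have h1 : (1:ℝ)/2 ≤ (μ (ball p r)).toReal / (ω * r^d) := by linarith [h.1]
    have h2 : (μ (ball p r)).toReal / (ω * r^d) ≤ 3/2 := by linarith [h.2]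
    constructor
    · have := (le_div_iff₀ hpos).mp h1
      nlinarith
    · have := (div_le_iff₀ hpos).mp h2
      nlinarith
  have lb₁ : ∀ p : M, ω/2 * r₁^d ≤ (μ (ball p r₁)).toReal :=
    fun p => (key p r₁ hr₁0 hr₁r₀).1
  refine ⟨min (ω/2) (ω/2 * r₁^d / D^d), max (3*ω/2) ((μ Set.univ).toReal / r₁^d),
    lt_min (by linarith) (div_pos (mul_pos (by linarith) (pow_pos hr₁0 d)) (pow_pos hD d)),
    lt_max_of_lt_left (by linarith), ?_⟩
  intro p r hr hrD
  have hrd : (0:ℝ) ≤ r^d := pow_nonneg hr.le d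
  by_cases hcase : r < r₁
  · obtain ⟨hl, hu⟩ := key p r hr (hcase.trans hr₁r₀)
    constructor
    · calc min (ω/2) (ω/2 * r₁^d / D^d) * r^d ≤ ω/2 * r^d :=
            mul_le_mul_of_nonneg_right (min_le_left _ _) hrd
        _ ≤ _ := hl
    · calc (μ (ball p r)).toReal ≤ 3*ω/2 * r^d := hu
        _ ≤ max (3*ω/2) ((μ Set.univ).toReal / r₁^d) * r^d :=
            mul_le_mul_of_nonneg_right (le_max_left _ _) hrd
  · push_neg at hcase
    have hmono : (μ (ball p r₁)).toReal ≤ (μ (ball p r)).toReal :=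
      ENNReal.toReal_mono (hfin p r) (measure_mono (ball_subset_ball hcase))
    have hrDle : r ≤ D := hrD.le
    constructor
    · have h3 : min (ω/2) (ω/2 * r₁^d / D^d) * r^d ≤ (ω/2 * r₁^d / D^d) * D^d := by
        have := mul_le_mul_of_nonneg_right (min_le_right (ω/2) (ω/2 * r₁^d / D^d)) hrd
        have h4 : (ω/2 * r₁^d / D^d) * r^d ≤ (ω/2 * r₁^d / D^d) * D^d := by
          apply mul_le_mul_of_nonneg_left (pow_le_pow_left₀ hr.le hrDle d)
          positivity
        linarith
      have h5 : (ω/2 * r₁^d / D^d) * D^d = ω/2 * r₁^d := by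
        field_simp
      calc min (ω/2) (ω/2 * r₁^d / D^d) * r^d ≤ ω/2 * r₁^d := by rw [h5] at h3; exact h3
        _ ≤ (μ (ball p r₁)).toReal := lb₁ p
        _ ≤ _ := hmono
    · have h6 : (μ (ball p r)).toReal ≤ (μ Set.univ).toReal :=
        ENNReal.toReal_mono (measure_ne_top μ _) (measure_mono (Set.subset_univ _))
      have h7 : (μ Set.univ).toReal = ((μ Set.univ).toReal / r₁^d) * r₁^d := by
        field_simp
      have h8 : ((μ Set.univ).toReal / r₁^d) * r₁^d ≤ ((μ Set.univ).toReal / r₁^d) * r^d := by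
        apply mul_le_mul_of_nonneg_left (pow_le_pow_left₀ hr₁0.le hcase d)
        positivity
      calc (μ (ball p r)).toReal ≤ (μ Set.univ).toReal := h6
        _ ≤ ((μ Set.univ).toReal / r₁^d) * r^d := by linarith
        _ ≤ max (3*ω/2) ((μ Set.univ).toReal / r₁^d) * r^d :=
            mul_le_mul_of_nonneg_right (le_max_right _ _) hrd
end

section
/- Let d be a positive integer, let (M, dist) be a metric space, and let μ be a Borel measure on M with 0 < μ(M) < ∞ that satisfies the upper Ahlfors bound μ(B(p,r)) ≤ C₀·r^d for all p ∈ M and all r > 0, for some constant C₀ > 0. Let γ ∈ (0, ∞]. Then there exists a constant c > 0 such that for every positive integer n and every nonempty finite set P ⊂ M with |P| ≤ n one has ‖dist(·, P)‖_{L_γ(μ)} ≥ c·n^{−1/d}. -/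
open MeasureTheory Metric

/-- under an upper Ahlfors bound `μ(B(p,r)) ≤ C₀ r^d`, the `L_γ(μ)`-norm
of the distance function to any set of at most `n` points is at least `c · n^{-1/d}`. -/
theorem distortion_lower_bound_of_upper_ahlfors
    {M : Type*} [MetricSpace M] [MeasurableSpace M] [BorelSpace M]
    (d : ℕ) (hd : 0 < d)
    (μ : Measure M) (hμpos : 0 < μ Set.univ) (hμfin : μ Set.univ < ⊤)
    (C₀ : ℝ) (hC₀ : 0 < C₀)
    (hupper : ∀ (p : M) (r : ℝ), 0 < r → (μ (ball p r)).toReal ≤ C₀ * r ^ d)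
    (γ : ENNReal) (hγ : 0 < γ) :
    ∃ c : ℝ, 0 < c ∧ ∀ (n : ℕ), 0 < n → ∀ P : Finset M, P.Nonempty → P.card ≤ n →
      ENNReal.ofReal (c * (n : ℝ) ^ (-(1 : ℝ) / d)) ≤
        eLpNorm (fun x => infDist x (P : Set M)) γ μ := by
  set m : ℝ := (μ Set.univ).toReal with hm
  have hm0 : 0 < m := ENNReal.toReal_pos hμpos.ne' hμfin.ne
  set t : ℝ := (1 / γ).toReal with ht
  have ht0 : 0 ≤ t := ENNReal.toReal_nonneg
  have hd0 : (d : ℝ) ≠ 0 := Nat.cast_ne_zero.2 hd.ne'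
  refine ⟨(m / (2 * C₀)) ^ ((1 : ℝ) / d) * (m / 2) ^ t, by positivity, ?_⟩
  intro n hn P hP hPn
  have hn0 : (0 : ℝ) < n := Nat.cast_pos.2 hn
  set r : ℝ := (m / (2 * C₀)) ^ ((1 : ℝ) / d) * (n : ℝ) ^ (-(1 : ℝ) / d) with hr
  have hr0 : 0 < r := by positivity
  -- r ^ d = m / (2 * C₀ * n)
  have hrd : r ^ d = m / (2 * C₀ * n) := by
    have h1 : ((m / (2 * C₀)) ^ ((1 : ℝ) / d)) ^ (d : ℝ) = m / (2 * C₀) := by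
      rw [← Real.rpow_mul (by positivity), one_div, inv_mul_cancel₀ hd0, Real.rpow_one]
    have h2 : ((n : ℝ) ^ (-(1 : ℝ) / d)) ^ (d : ℝ) = (n : ℝ)⁻¹ := by
      rw [← Real.rpow_mul (le_of_lt hn0), div_mul_cancel₀ _ hd0, Real.rpow_neg_one]
    have : r ^ (d : ℝ) = m / (2 * C₀) * (n : ℝ)⁻¹ := by
      rw [hr, Real.mul_rpow (by positivity) (by positivity), h1, h2]
    rw [← Real.rpow_natCast r d, this]
    field_simp
  -- measure of the union of balls
  have hball : ∀ p : M, μ (ball p r) ≤ ENNReal.ofReal (m / (2 * n)) := by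
    intro p
    have hfin : μ (ball p r) ≠ ⊤ := ne_top_of_le_ne_top hμfin.ne (measure_mono (Set.subset_univ _))
    have := hupper p r hr0
    rw [hrd] at this
    calc μ (ball p r) = ENNReal.ofReal (μ (ball p r)).toReal := (ENNReal.ofReal_toReal hfin).symm
      _ ≤ ENNReal.ofReal (C₀ * (m / (2 * C₀ * n))) := ENNReal.ofReal_le_ofReal this
      _ = ENNReal.ofReal (m / (2 * n)) := by congr 1; field_simp
  have hunion : μ (⋃ p ∈ P, ball p r) ≤ ENNReal.ofReal (m / 2) := by
    calc μ (⋃ p ∈ P, ball p r) ≤ ∑ p ∈ P, μ (ball p r) := measure_biUnion_finset_le P _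
      _ ≤ ∑ _p ∈ P, ENNReal.ofReal (m / (2 * n)) := Finset.sum_le_sum fun p _ => hball p
      _ ≤ n * ENNReal.ofReal (m / (2 * n)) := by
          rw [Finset.sum_const, nsmul_eq_mul]
          gcongr ?_ * _
          exact_mod_cast hPn
      _ = ENNReal.ofReal (n * (m / (2 * n))) := by
          rw [ENNReal.ofReal_mul (by positivity), ENNReal.ofReal_natCast]
      _ = ENNReal.ofReal (m / 2) := by congr 1; field_simp
  -- the set where the distance is at least r
  set A : Set M := {x | r ≤ infDist x (P : Set M)} with hA
  have hAmeas : MeasurableSet A :=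
    measurableSet_le measurable_const (continuous_infDist_pt _).measurable
  have hcompl : Aᶜ ⊆ ⋃ p ∈ P, ball p r := by
    intro x hx
    simp only [hA, Set.mem_compl_iff, Set.mem_setOf_eq, not_le] at hx
    obtain ⟨p, hpP, hpd⟩ := infDist_lt_iff (by exact_mod_cast hP) |>.1 hx
    exact Set.mem_biUnion hpP (mem_ball'.2 (by rwa [dist_comm]))
  have hAlow : ENNReal.ofReal (m / 2) ≤ μ A := by
    have h1 : μ Set.univ ≤ μ A + μ Aᶜ := by
      rw [← Set.union_compl_self A] at *
      exact measure_union_le _ _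
    have h2 : μ Aᶜ ≤ ENNReal.ofReal (m / 2) := (measure_mono hcompl).trans hunion
    have h3 : ENNReal.ofReal m ≤ μ A + ENNReal.ofReal (m / 2) := by
      rw [hm] at *
      calc ENNReal.ofReal (μ Set.univ).toReal = μ Set.univ := ENNReal.ofReal_toReal hμfin.ne
        _ ≤ μ A + μ Aᶜ := h1
        _ ≤ μ A + ENNReal.ofReal (m / 2) := by gcongr
    have := tsub_le_iff_right.2 h3
    calc ENNReal.ofReal (m / 2) = ENNReal.ofReal m - ENNReal.ofReal (m / 2) := by
          rw [← ENNReal.ofReal_sub _ (by positivity)]; congr 1; ring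
      _ ≤ μ A := this
  have hA0 : μ A ≠ 0 := by
    intro h
    rw [h] at hAlow
    simp only [nonpos_iff_eq_zero, ENNReal.ofReal_eq_zero] at hAlow
    linarith
  -- lower bound by indicator
  have hmono : eLpNorm (A.indicator fun _ => r) γ μ ≤
      eLpNorm (fun x => infDist x (P : Set M)) γ μ := by
    refine eLpNorm_mono fun x => ?_
    by_cases hx : x ∈ A
    · rw [Set.indicator_of_mem hx, Real.norm_eq_abs, Real.norm_eq_abs,
        abs_of_pos hr0, abs_of_nonneg infDist_nonneg]
      exact hx
    · rw [Set.indicator_of_notMem hx]; simp [abs_of_nonneg infDist_nonneg, infDist_nonneg]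
  have hkey : ENNReal.ofReal r * ENNReal.ofReal (m / 2) ^ t ≤
      eLpNorm (A.indicator fun _ => r) γ μ := by
    rcases eq_or_ne γ ⊤ with hγtop | hγtop
    · have htz : t = 0 := by simp [ht, hγtop]
      rw [htz, ENNReal.rpow_zero, mul_one, hγtop, eLpNorm_exponent_top,
        eLpNormEssSup_indicator_const_eq A r hA0]
      exact (Real.enorm_eq_ofReal hr0.le).ge
    · rw [eLpNorm_indicator_const hAmeas hγ.ne' hγtop]
      have htt : t = 1 / γ.toReal := by
        rw [ht, one_div, one_div, ENNReal.toReal_inv]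
      rw [← htt]
      gcongr
      exact (Real.enorm_eq_ofReal hr0.le).ge
  -- combine
  calc ENNReal.ofReal ((m / (2 * C₀)) ^ ((1 : ℝ) / d) * (m / 2) ^ t * (n : ℝ) ^ (-(1 : ℝ) / d))
      = ENNReal.ofReal (r * (m / 2) ^ t) := by rw [hr]; ring_nf
    _ = ENNReal.ofReal r * ENNReal.ofReal ((m / 2) ^ t) := ENNReal.ofReal_mul hr0.le
    _ = ENNReal.ofReal r * ENNReal.ofReal (m / 2) ^ t := by
        rw [← ENNReal.ofReal_rpow_of_pos (by positivity)]
    _ ≤ eLpNorm (A.indicator fun _ => r) γ μ := hkey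
    _ ≤ _ := hmono
end

section
/- Let d be a positive integer and γ ∈ (0, ∞). Let (M, dist) be a compact metric space with diameter D ∈ (0, ∞), let ν be a Borel probability measure on M satisfying ν(B(x,r)) ≥ c₀·r^d for all x ∈ M and all 0 < r < D, for some constant c₀ > 0, and let μ be a finite Borel measure on M. Let X_1, X_2, … be i.i.d. random variables with law ν. Then there exists a constant C > 0 such that for every positive integer n: E[ ∫_M dist(x, {X_1, …, X_n})^γ dμ(x) ] ≤ C·n^{−γ/d}. -/
/-!
Fix `x ∈ M`. The nearest of `n` samples is farther than `t` from `x` only if every sample misses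
`B(x, t)`; by independence and the lower bound on `ν` this has probability at most
`(1 - c₀ tᵈ)ⁿ ≤ exp (-c₀ n tᵈ)` (and none at all once `t ≥ diam M`). The layer-cake formula turns
this tail bound into `E[dist(x, {X₁, …, Xₙ})^γ] ≤ (c₀ n)^(-γ/d) Γ(γ/d + 1)`, and integrating in
`x` against `μ` (Tonelli) gives the claim with `C` proportional to `μ(M)`.
-/

open MeasureTheory Metric ProbabilityTheory

theorem lintegral_ofReal_rpow_le_of_meas_lt_le_exp {Ω : Type*} [MeasurableSpace Ω]
    {P : Measure Ω} {f : Ω → ℝ} (hf_nn : ∀ ω, 0 ≤ f ω) (hf : AEMeasurable f P)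
    {γ p b : ℝ} (hγ : 0 < γ) (hp : 0 < p) (hb : 0 < b)
    (htail : ∀ t > 0, P {ω | t < f ω} ≤ ENNReal.ofReal (Real.exp (-b * t ^ p))) :
    ∫⁻ ω, ENNReal.ofReal (f ω) ^ γ ∂P ≤ ENNReal.ofReal (b ^ (-γ / p) * Real.Gamma (γ / p + 1)) := by
  have hgamma : ∫ t in Set.Ioi (0 : ℝ), t ^ (γ - 1) * Real.exp (-b * t ^ p)
      = b ^ (-γ / p) * (1 / p) * Real.Gamma (γ / p) := by
    simpa using integral_rpow_mul_exp_neg_mul_rpow hp (by linarith : -1 < γ - 1) hb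
  calc ∫⁻ ω, ENNReal.ofReal (f ω) ^ γ ∂P = ∫⁻ ω, ENNReal.ofReal (f ω ^ γ) ∂P := by
        simp only [ENNReal.ofReal_rpow_of_nonneg (hf_nn _) hγ.le]
    _ = ENNReal.ofReal γ *
          ∫⁻ t in Set.Ioi (0 : ℝ), P {ω | t < f ω} * ENNReal.ofReal (t ^ (γ - 1)) :=
        lintegral_rpow_eq_lintegral_meas_lt_mul P (ae_of_all _ hf_nn) hf hγ
    _ ≤ ENNReal.ofReal γ *
          ∫⁻ t in Set.Ioi (0 : ℝ), ENNReal.ofReal (t ^ (γ - 1) * Real.exp (-b * t ^ p)) := by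
        refine mul_le_mul_right (setLIntegral_mono' measurableSet_Ioi fun t ht => ?_) _
        rw [ENNReal.ofReal_mul (Real.rpow_nonneg (le_of_lt ht) _), mul_comm]
        gcongr
        exact htail t ht
    _ = ENNReal.ofReal (γ * (b ^ (-γ / p) * (1 / p) * Real.Gamma (γ / p))) := by
        rw [← ofReal_integral_eq_lintegral_ofReal
            (integrableOn_rpow_mul_exp_neg_mul_rpow (by linarith) hp hb), hgamma,
          ENNReal.ofReal_mul hγ.le]
        filter_upwards [self_mem_ae_restrict measurableSet_Ioi] with t ht
        have : (0 : ℝ) < t := ht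
        positivity
    _ = ENNReal.ofReal (b ^ (-γ / p) * Real.Gamma (γ / p + 1)) := by
        rw [Real.Gamma_add_one (by positivity)]
        ring_nf

theorem ProbabilityTheory.iIndepFun.measure_biInter_preimage_eq_pow
    {Ω ι E : Type*} [MeasurableSpace Ω] [MeasurableSpace E] {P : Measure Ω} {ν : Measure E}
    {X : ι → Ω → E} (hindep : iIndepFun X P) (hmeas : ∀ i, Measurable (X i))
    (hlaw : ∀ i, Measure.map (X i) P = ν) (I : Finset ι) {s : Set E} (hs : MeasurableSet s) :
    P (⋂ i ∈ I, X i ⁻¹' s) = ν s ^ I.card := by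
  rw [hindep.meas_biInter fun i _ => ⟨s, hs, rfl⟩, ← Finset.prod_const]
  refine Finset.prod_congr rfl fun i _ => ?_
  rw [← hlaw i, Measure.map_apply (hmeas i) hs]

theorem prob_compl_le_exp_neg {E : Type*} [MeasurableSpace E] {ν : Measure E}
    [IsProbabilityMeasure ν] {s : Set E} (hs : MeasurableSet s) {a : ℝ} (ha : a ≤ (ν s).toReal) :
    ν sᶜ ≤ ENNReal.ofReal (Real.exp (-a)) := by
  rw [prob_compl_eq_one_sub hs, ← ENNReal.ofReal_toReal (measure_ne_top ν s),
    ← ENNReal.ofReal_one, ← ENNReal.ofReal_sub _ ENNReal.toReal_nonneg]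
  exact ENNReal.ofReal_le_ofReal (by linarith [Real.one_sub_le_exp_neg a])

section NearestSample

variable {Ω M : Type*} [MetricSpace M] {X : ℕ → Ω → M} {n : ℕ}

theorem measurable_infDist_image_Iio [MeasurableSpace Ω] [MeasurableSpace M]
    [SecondCountableTopology M] [OpensMeasurableSpace M]
    (hmeas : ∀ i, Measurable (X i)) (n : ℕ) :
    Measurable fun q : Ω × M => infDist q.2 ((fun i => X i q.1) '' Set.Iio n) := by
  simp only [infDist, infEDist, iInf_image]
  exact Measurable.ennreal_toReal <| Measurable.iInf fun i => Measurable.iInf fun _ =>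
    measurable_snd.edist ((hmeas i).comp measurable_fst)

theorem setOf_lt_infDist_image_Iio_subset (x : M) (t : ℝ) :
    {ω | t < infDist x ((fun i => X i ω) '' Set.Iio n)} ⊆
      ⋂ i ∈ Finset.range n, X i ⁻¹' (ball x t)ᶜ := by
  intro ω hω
  refine Set.mem_iInter₂.mpr fun i hi => ?_
  rw [Set.mem_preimage, Set.mem_compl_iff, mem_ball, not_lt, dist_comm]
  have hi' : i ∈ Set.Iio n := Finset.mem_range.mp hi
  exact (infDist_le_dist_of_mem (Set.mem_image_of_mem _ hi')).trans' hω.le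

theorem setOf_lt_infDist_image_Iio_eq_empty [BoundedSpace M] (hn : 0 < n) (x : M) {t : ℝ}
    (ht : diam (Set.univ : Set M) ≤ t) :
    {ω | t < infDist x ((fun i => X i ω) '' Set.Iio n)} = ∅ := by
  refine Set.eq_empty_of_forall_notMem fun ω hω => (hω.trans_le ?_).not_ge ht
  exact (infDist_le_dist_of_mem (Set.mem_image_of_mem _ (Set.mem_Iio.mpr hn))).trans
    (dist_le_diam_of_mem (Bornology.IsBounded.all _) trivial trivial)

theorem measure_lt_infDist_image_Iio_le_exp [MeasurableSpace Ω] [MeasurableSpace M]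
    [OpensMeasurableSpace M] [BoundedSpace M] {P : Measure Ω} {ν : Measure M}
    [IsProbabilityMeasure ν] (hindep : iIndepFun X P) (hmeas : ∀ i, Measurable (X i))
    (hlaw : ∀ i, Measure.map (X i) P = ν) {c p : ℝ}
    (hlower : ∀ (x : M) (r : ℝ), 0 < r → r < diam (Set.univ : Set M) →
      c * r ^ p ≤ (ν (ball x r)).toReal)
    (hn : 0 < n) (x : M) {t : ℝ} (ht : 0 < t) :
    P {ω | t < infDist x ((fun i => X i ω) '' Set.Iio n)} ≤
      ENNReal.ofReal (Real.exp (-(c * n) * t ^ p)) := by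
  rcases lt_or_ge t (diam (Set.univ : Set M)) with htD | htD
  · calc P {ω | t < infDist x ((fun i => X i ω) '' Set.Iio n)}
        ≤ P (⋂ i ∈ Finset.range n, X i ⁻¹' (ball x t)ᶜ) :=
          measure_mono (setOf_lt_infDist_image_Iio_subset x t)
      _ = ν (ball x t)ᶜ ^ n := by
          rw [hindep.measure_biInter_preimage_eq_pow hmeas hlaw _ measurableSet_ball.compl,
            Finset.card_range]
      _ ≤ ENNReal.ofReal (Real.exp (-(c * t ^ p))) ^ n := by
          gcongr
          exact prob_compl_le_exp_neg measurableSet_ball (hlower x t ht htD)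
      _ = ENNReal.ofReal (Real.exp (-(c * n) * t ^ p)) := by
          rw [← ENNReal.ofReal_pow (Real.exp_nonneg _), ← Real.exp_nat_mul]
          ring_nf
  · rw [setOf_lt_infDist_image_Iio_eq_empty hn x htD, measure_empty]
    exact zero_le

theorem lintegral_infDist_image_Iio_rpow_le [MeasurableSpace Ω] [MeasurableSpace M]
    [OpensMeasurableSpace M] [SecondCountableTopology M] [BoundedSpace M] {P : Measure Ω}
    {ν : Measure M} [IsProbabilityMeasure ν] (hindep : iIndepFun X P)
    (hmeas : ∀ i, Measurable (X i)) (hlaw : ∀ i, Measure.map (X i) P = ν) {c p γ : ℝ}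
    (hc : 0 < c) (hp : 0 < p) (hγ : 0 < γ)
    (hlower : ∀ (x : M) (r : ℝ), 0 < r → r < diam (Set.univ : Set M) →
      c * r ^ p ≤ (ν (ball x r)).toReal)
    (hn : 0 < n) (x : M) :
    ∫⁻ ω, ENNReal.ofReal (infDist x ((fun i => X i ω) '' Set.Iio n)) ^ γ ∂P ≤
      ENNReal.ofReal ((c * n) ^ (-γ / p) * Real.Gamma (γ / p + 1)) :=
  lintegral_ofReal_rpow_le_of_meas_lt_le_exp (fun _ => infDist_nonneg)
    ((measurable_infDist_image_Iio hmeas n).comp measurable_prodMk_right).aemeasurable hγ hp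
    (by positivity) fun _ ht =>
      measure_lt_infDist_image_Iio_le_exp hindep hmeas hlaw hlower hn x ht

end NearestSample

theorem expected_distortion_upper_bound_general
    {Ω : Type*} [MeasurableSpace Ω] (Pr : Measure Ω) [IsProbabilityMeasure Pr]
    {M : Type*} [MetricSpace M] [CompactSpace M] [MeasurableSpace M] [BorelSpace M]
    (d : ℕ) (hd : 0 < d) (γ : ℝ) (hγ : 0 < γ)
    (ν : Measure M) [IsProbabilityMeasure ν]
    (c₀ : ℝ) (hc₀ : 0 < c₀)
    (hlower : ∀ (x : M) (r : ℝ), 0 < r → r < diam (Set.univ : Set M) →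
      c₀ * r ^ d ≤ (ν (ball x r)).toReal)
    (μ : Measure M) [IsFiniteMeasure μ]
    (X : ℕ → Ω → M) (hXmeas : ∀ i, Measurable (X i))
    (hXlaw : ∀ i, Measure.map (X i) Pr = ν)
    (hXindep : iIndepFun X Pr) :
    ∃ C : ℝ, 0 < C ∧ ∀ n : ℕ, 0 < n →
      ∫⁻ ω, (∫⁻ x, (ENNReal.ofReal (infDist x ((fun i => X i ω) '' Set.Iio n))) ^ γ ∂μ) ∂Pr
        ≤ ENNReal.ofReal (C * (n : ℝ) ^ (-γ / d)) := by
  have hd' : (0 : ℝ) < d := by exact_mod_cast hd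
  have hlower' : ∀ (x : M) (r : ℝ), 0 < r → r < diam (Set.univ : Set M) →
      c₀ * r ^ (d : ℝ) ≤ (ν (ball x r)).toReal := by
    simpa only [Real.rpow_natCast] using hlower
  set G := Real.Gamma (γ / d + 1)
  refine ⟨((μ Set.univ).toReal + 1) * c₀ ^ (-γ / d) * G, by positivity, fun n hn => ?_⟩
  calc ∫⁻ ω, (∫⁻ x, (ENNReal.ofReal (infDist x ((fun i => X i ω) '' Set.Iio n))) ^ γ ∂μ) ∂Pr
      = ∫⁻ x, (∫⁻ ω, (ENNReal.ofReal (infDist x ((fun i => X i ω) '' Set.Iio n))) ^ γ ∂Pr) ∂μ :=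
        lintegral_lintegral_swap
          ((measurable_infDist_image_Iio hXmeas n).ennreal_ofReal.pow_const γ).aemeasurable
    _ ≤ ∫⁻ _, ENNReal.ofReal ((c₀ * n) ^ (-γ / d) * G) ∂μ := lintegral_mono fun x =>
        lintegral_infDist_image_Iio_rpow_le hXindep hXmeas hXlaw hc₀ hd' hγ hlower' hn x
    _ ≤ ENNReal.ofReal ((c₀ * n) ^ (-γ / d) * G) *
          ENNReal.ofReal ((μ Set.univ).toReal + 1) := by
        rw [lintegral_const]
        gcongr
        exact (ENNReal.le_ofReal_iff_toReal_le (measure_ne_top μ _) (by positivity)).2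
          (le_add_of_nonneg_right zero_le_one)
    _ = ENNReal.ofReal (((μ Set.univ).toReal + 1) * c₀ ^ (-γ / d) * G * (n : ℝ) ^ (-γ / d)) := by
        rw [← ENNReal.ofReal_mul (by positivity), Real.mul_rpow hc₀.le n.cast_nonneg]
        ring_nf

/-- expected `γ`-distortion of `n` i.i.d. points whose law satisfies a
lower Ahlfors bound is at most `C · n^{-γ/d}`. -/
theorem expected_distortion_upper_bound
    {Ω : Type*} [MeasurableSpace Ω] (Pr : Measure Ω) [IsProbabilityMeasure Pr]
    {M : Type*} [MetricSpace M] [CompactSpace M] [MeasurableSpace M] [BorelSpace M]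
    (d : ℕ) (hd : 0 < d) (γ : ℝ) (hγ : 0 < γ)
    (hdiam : 0 < diam (Set.univ : Set M))
    (ν : Measure M) [IsProbabilityMeasure ν]
    (c₀ : ℝ) (hc₀ : 0 < c₀)
    (hlower : ∀ (x : M) (r : ℝ), 0 < r → r < diam (Set.univ : Set M) →
      c₀ * r ^ d ≤ (ν (ball x r)).toReal)
    (μ : Measure M) [IsFiniteMeasure μ]
    (X : ℕ → Ω → M) (hXmeas : ∀ i, Measurable (X i))
    (hXlaw : ∀ i, Measure.map (X i) Pr = ν)
    (hXindep : iIndepFun X Pr) :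
    ∃ C : ℝ, 0 < C ∧ ∀ n : ℕ, 0 < n →
      ∫⁻ ω, (∫⁻ x, (ENNReal.ofReal (infDist x ((fun i => X i ω) '' Set.Iio n))) ^ γ ∂μ) ∂Pr
        ≤ ENNReal.ofReal (C * (n : ℝ) ^ (-γ / d)) :=
  expected_distortion_upper_bound_general Pr d hd γ hγ ν c₀ hc₀ hlower μ X hXmeas hXlaw hXindep
end

section
/- Let d be a positive integer and α ∈ (0, ∞). Let (M, dist) be a compact metric space with diameter D ∈ (0, ∞) and let ν be a Borel probability measure on M satisfying ν(B(x,r)) ≥ c₀·r^d for all x ∈ M and all 0 < r < D, for some constant c₀ > 0. Let X_1, X_2, … be i.i.d. random variables with law ν. Then there exists a constant C > 0 such that for every integer n ≥ 2: E[ (sup_{x∈M} dist(x, {X_1, …, X_n}))^α ] ≤ C·(log(n)/n)^{α/d}. -/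
/-!
Fix a radius `r` and a maximal `r`-separated set `S ⊆ M`. The balls of radius `r / 2` around
`S` are disjoint and each has mass at least `c₀ (r / 2) ^ d`, so `#S ≤ 2 ^ d / (c₀ r ^ d)`, and `S`
is an `r`-net. If every point of `S` has one of the first `n` samples within distance `r`, the
covering radius is at most `2 r`; by independence and a union bound this fails with probability
at most `#S · exp (-n c₀ r ^ d)`, and the covering radius never exceeds `diam M`. Choosing
`r ^ d = (α / d + 1) log n / (c₀ n)` makes the failure probability of order `n ^ (-α / d) / log n`.
-/

open MeasureTheory Metric ProbabilityTheory Set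
open scoped ENNReal NNReal

/-- Since `infDist x ∅ = 0`, the empty set has covering radius `0`. -/
noncomputable def coveringRadius {M : Type*} [PseudoMetricSpace M] (P : Set M) : ℝ :=
  ⨆ x, infDist x P

section CoveringRadius

variable {M : Type*} [PseudoMetricSpace M]

lemma coveringRadius_nonneg (P : Set M) : 0 ≤ coveringRadius P :=
  Real.iSup_nonneg fun _ => infDist_nonneg

lemma coveringRadius_le_diam [BoundedSpace M] (P : Set M) :
    coveringRadius P ≤ diam (univ : Set M) := by
  refine Real.iSup_le (fun x => ?_) diam_nonneg
  rcases P.eq_empty_or_nonempty with rfl | ⟨p, hp⟩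
  · simpa only [infDist_empty] using diam_nonneg
  · exact (infDist_le_dist_of_mem hp).trans
      (dist_le_diam_of_mem (Bornology.isBounded_univ.2 inferInstance) trivial trivial)

lemma coveringRadius_le_two_mul_of_isCover {P S : Set M} {ε : ℝ≥0} (hS : IsCover ε univ S)
    (hP : ∀ s ∈ S, ∃ p ∈ P, dist s p < ε) : coveringRadius P ≤ 2 * ε := by
  refine Real.iSup_le (fun x => ?_) (by positivity)
  obtain ⟨s, hs, hxs⟩ := hS (mem_univ x)
  obtain ⟨p, hp, hsp⟩ := hP s hs
  replace hxs : dist x s ≤ ε := by simpa [edist_le_coe] using hxs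
  calc infDist x P ≤ dist x p := infDist_le_dist_of_mem hp
    _ ≤ dist x s + dist s p := dist_triangle x s p
    _ ≤ 2 * ε := by linarith

end CoveringRadius

section Packing

variable {X : Type*} [PseudoMetricSpace X] [MeasurableSpace X] [OpensMeasurableSpace X]
  (ν : Measure X) [IsProbabilityMeasure ν] {c : ℝ} {ε : ℝ≥0}

lemma Finset.card_mul_le_one_of_isSeparated (t : Finset X) (ht : IsSeparated ε (t : Set X))
    (h : ∀ x ∈ t, c ≤ ν.real (ball x (ε / 2))) : t.card * c ≤ 1 := by
  have hdisj : (t : Set X).PairwiseDisjoint fun x => ball x (ε / 2) := by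
    intro a ha b hb hab
    have : (ε : ℝ) < dist a b := by simpa [edist_dist] using ht ha hb hab
    exact ball_disjoint_ball (by linarith)
  calc t.card * c = ∑ _ ∈ t, c := by rw [Finset.sum_const, nsmul_eq_mul]
    _ ≤ ∑ x ∈ t, ν.real (ball x (ε / 2)) := Finset.sum_le_sum h
    _ = ν.real (⋃ x ∈ t, ball x (ε / 2)) :=
      (measureReal_biUnion_finset hdisj fun _ _ => measurableSet_ball).symm
    _ ≤ 1 := measureReal_le_one

lemma packingNumber_univ_le_floor_inv (hc : 0 < c) (h : ∀ x, c ≤ ν.real (ball x (ε / 2))) :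
    packingNumber ε (univ : Set X) ≤ ⌊c⁻¹⌋₊ := by
  refine iSup₂_le fun C _ => iSup_le fun hC => ?_
  by_contra! hlt
  obtain ⟨t, htC, ht⟩ := exists_subset_encard_eq (Order.add_one_le_of_lt hlt)
  have htfin : t.Finite := finite_of_encard_eq_coe (k := ⌊c⁻¹⌋₊ + 1) (by simpa using ht)
  have hcard : htfin.toFinset.card = ⌊c⁻¹⌋₊ + 1 := by
    rw [← ENat.natCast_inj, ← encard_coe_eq_coe_finsetCard, Finite.coe_toFinset, ht]; rfl
  have hpack := htfin.toFinset.card_mul_le_one_of_isSeparated ν (by simpa using hC.subset htC)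
    fun x _ => h x
  have hfloor := Nat.lt_floor_add_one c⁻¹
  rw [inv_lt_iff_one_lt_mul₀ hc] at hfloor
  rw [hcard] at hpack
  push_cast at hpack
  linarith

lemma exists_finset_isCover_card_mul_le_one (hc : 0 < c) (h : ∀ x, c ≤ ν.real (ball x (ε / 2))) :
    ∃ S : Finset X, IsCover ε univ (S : Set X) ∧ S.card * c ≤ 1 := by
  have hfin : packingNumber ε (univ : Set X) ≠ ⊤ :=
    ne_top_of_le_ne_top (by simp) (packingNumber_univ_le_floor_inv ν hc h)
  have hS : (maximalSeparatedSet ε (univ : Set X)).Finite := by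
    rw [← encard_ne_top_iff, encard_maximalSeparatedSet hfin]; exact hfin
  exact ⟨hS.toFinset, by simpa using isCover_maximalSeparatedSet hfin,
    hS.toFinset.card_mul_le_one_of_isSeparated ν (by simpa using isSeparated_maximalSeparatedSet)
      fun x _ => h x⟩

end Packing

lemma lintegral_le_add_mul_measure_compl {Ω : Type*} [MeasurableSpace Ω] (μ : Measure Ω)
    [IsZeroOrProbabilityMeasure μ] {f : Ω → ℝ≥0∞} {G : Set Ω} (hG : MeasurableSet G)
    {a b : ℝ≥0∞} (hfG : ∀ ω ∈ G, f ω ≤ a) (hf : ∀ ω, f ω ≤ b) :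
    ∫⁻ ω, f ω ∂μ ≤ a + b * μ Gᶜ := by
  rw [← lintegral_add_compl f hG]
  gcongr
  · calc ∫⁻ ω in G, f ω ∂μ ≤ ∫⁻ _ in G, a ∂μ := setLIntegral_mono measurable_const hfG
      _ = a * μ G := setLIntegral_const G a
      _ ≤ a := mul_le_of_le_one_right' prob_le_one
  · calc ∫⁻ ω in Gᶜ, f ω ∂μ ≤ ∫⁻ _ in Gᶜ, b ∂μ :=
          setLIntegral_mono measurable_const fun ω _ => hf ω
      _ = b * μ Gᶜ := setLIntegral_const Gᶜ b

section Sampling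

variable {Ω M : Type*} [MeasurableSpace Ω] {Pr : Measure Ω} [MeasurableSpace M]
  {ν : Measure M} [IsProbabilityMeasure ν] {X : ℕ → Ω → M}

lemma measure_compl_le_exp_neg_measureReal {B : Set M} (hB : MeasurableSet B) :
    ν Bᶜ ≤ ENNReal.ofReal (Real.exp (-ν.real B)) := by
  rw [← ofReal_measureReal, measureReal_compl hB, probReal_univ]
  exact ENNReal.ofReal_le_ofReal (Real.one_sub_le_exp_neg _)

lemma measure_iInter_preimage_compl_le_exp (hXmeas : ∀ i, Measurable (X i))
    (hXlaw : ∀ i, Pr.map (X i) = ν) (hXindep : iIndepFun X Pr) {B : Set M}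
    (hB : MeasurableSet B) (n : ℕ) :
    Pr (⋂ i ∈ Finset.range n, X i ⁻¹' Bᶜ) ≤ ENNReal.ofReal (Real.exp (-(n * ν.real B))) := by
  calc Pr (⋂ i ∈ Finset.range n, X i ⁻¹' Bᶜ) = ∏ i ∈ Finset.range n, Pr (X i ⁻¹' Bᶜ) :=
        hXindep.meas_biInter fun i _ => ⟨Bᶜ, hB.compl, rfl⟩
    _ = ν Bᶜ ^ n := by
        have hlaw i : Pr (X i ⁻¹' Bᶜ) = ν Bᶜ := by
          rw [← hXlaw i, Measure.map_apply (hXmeas i) hB.compl]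
        simp only [hlaw, Finset.prod_const, Finset.card_range]
    _ ≤ ENNReal.ofReal (Real.exp (-ν.real B)) ^ n := by
        gcongr; exact measure_compl_le_exp_neg_measureReal hB
    _ = ENNReal.ofReal (Real.exp (-(n * ν.real B))) := by
        rw [← ENNReal.ofReal_pow (Real.exp_nonneg _), ← Real.exp_nat_mul, mul_neg]

end Sampling

section CoveringRadiusOfSample

variable {Ω M : Type*} [MeasurableSpace Ω] {Pr : Measure Ω} [IsProbabilityMeasure Pr]
  [PseudoMetricSpace M] [BoundedSpace M] [MeasurableSpace M] [OpensMeasurableSpace M]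
  {ν : Measure M} [IsProbabilityMeasure ν] {X : ℕ → Ω → M} {α : ℝ}

lemma lintegral_coveringRadius_rpow_le_of_isCover (hα : 0 ≤ α)
    (hXmeas : ∀ i, Measurable (X i)) (hXlaw : ∀ i, Pr.map (X i) = ν) (hXindep : iIndepFun X Pr)
    {ε : ℝ≥0} {S : Finset M} (hS : IsCover ε univ (S : Set M)) {p : ℝ}
    (hp : ∀ s ∈ S, p ≤ ν.real (ball s ε)) (n : ℕ) :
    ∫⁻ ω, ENNReal.ofReal (coveringRadius ((X · ω) '' Iio n) ^ α) ∂Pr ≤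
      ENNReal.ofReal ((2 * ε) ^ α) + ENNReal.ofReal (diam (univ : Set M) ^ α) *
        (S.card * ENNReal.ofReal (Real.exp (-(n * p)))) := by
  set G := ⋂ s ∈ S, ⋃ i ∈ Finset.range n, X i ⁻¹' ball s ε
  have hG : MeasurableSet G :=
    .biInter S.countable_toSet fun s _ => .biUnion (Finset.range n).countable_toSet
      fun i _ => hXmeas i measurableSet_ball
  refine (lintegral_le_add_mul_measure_compl Pr hG (a := ENNReal.ofReal ((2 * ε) ^ α))
    (b := ENNReal.ofReal (diam (univ : Set M) ^ α)) (fun ω hω => ?_) (fun ω => ?_)).trans ?_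
  · refine ENNReal.ofReal_le_ofReal (Real.rpow_le_rpow (coveringRadius_nonneg _) ?_ hα)
    refine coveringRadius_le_two_mul_of_isCover hS fun s hs => ?_
    obtain ⟨i, hi, hXi⟩ := mem_iUnion₂.1 (mem_iInter₂.1 hω s hs)
    exact ⟨X i ω, mem_image_of_mem _ (Finset.mem_range.1 hi), by rw [dist_comm]; exact hXi⟩
  · exact ENNReal.ofReal_le_ofReal
      (Real.rpow_le_rpow (coveringRadius_nonneg _) (coveringRadius_le_diam _) hα)
  · gcongr
    calc Pr Gᶜ = Pr (⋃ s ∈ S, ⋂ i ∈ Finset.range n, X i ⁻¹' (ball s ε)ᶜ) := by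
          simp only [G, compl_iInter, compl_iUnion, preimage_compl]
      _ ≤ ∑ s ∈ S, Pr (⋂ i ∈ Finset.range n, X i ⁻¹' (ball s ε)ᶜ) :=
          measure_biUnion_finset_le _ _
      _ ≤ ∑ _ ∈ S, ENNReal.ofReal (Real.exp (-(n * p))) := by
          gcongr with s hs
          refine (measure_iInter_preimage_compl_le_exp hXmeas hXlaw hXindep
            measurableSet_ball n).trans (ENNReal.ofReal_le_ofReal ?_)
          gcongr
          exact hp s hs
      _ = S.card * ENNReal.ofReal (Real.exp (-(n * p))) := by
          rw [Finset.sum_const, nsmul_eq_mul]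

lemma lintegral_coveringRadius_rpow_le (hα : 0 ≤ α) {d : ℕ} {c₀ : ℝ} (hc₀ : 0 < c₀)
    (hlower : ∀ (x : M) (r : ℝ), 0 < r → r < diam (univ : Set M) → c₀ * r ^ d ≤ ν.real (ball x r))
    (hXmeas : ∀ i, Measurable (X i)) (hXlaw : ∀ i, Pr.map (X i) = ν) (hXindep : iIndepFun X Pr)
    (n : ℕ) {r : ℝ} (hr : 0 < r) :
    ∫⁻ ω, ENNReal.ofReal (coveringRadius ((X · ω) '' Iio n) ^ α) ∂Pr ≤
      ENNReal.ofReal ((2 * r) ^ α + diam (univ : Set M) ^ α * (2 ^ d / (c₀ * r ^ d)) *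
        Real.exp (-(n * (c₀ * r ^ d)))) := by
  rcases le_or_gt (diam (univ : Set M)) r with hDr | hrD
  · calc ∫⁻ ω, ENNReal.ofReal (coveringRadius ((X · ω) '' Iio n) ^ α) ∂Pr
          ≤ ∫⁻ _, ENNReal.ofReal ((2 * r) ^ α) ∂Pr := by
          refine lintegral_mono fun ω => ENNReal.ofReal_le_ofReal
            (Real.rpow_le_rpow (coveringRadius_nonneg _) ?_ hα)
          linarith [coveringRadius_le_diam ((X · ω) '' Iio n)]
      _ = ENNReal.ofReal ((2 * r) ^ α) := by simp
      _ ≤ _ := ENNReal.ofReal_le_ofReal (le_add_of_nonneg_right (by positivity))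
  · lift r to ℝ≥0 using hr.le
    obtain ⟨S, hS, hcard⟩ := exists_finset_isCover_card_mul_le_one ν (ε := r)
      (c := c₀ * (r / 2) ^ d) (by positivity) fun x => hlower x _ (by positivity) (by linarith)
    have hcard' : (S.card : ℝ) ≤ 2 ^ d / (c₀ * r ^ d) := by
      rw [le_div_iff₀ (by positivity)]
      rw [div_pow] at hcard
      field_simp at hcard
      linarith
    refine (lintegral_coveringRadius_rpow_le_of_isCover hα hXmeas hXlaw hXindep hS
      (fun s _ => hlower s r hr hrD) n).trans ?_
    rw [ENNReal.ofReal_add (by positivity) (by positivity), ENNReal.ofReal_mul (by positivity),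
      ENNReal.ofReal_mul (by positivity), mul_assoc]
    gcongr
    rw [← ENNReal.ofReal_natCast]
    exact ENNReal.ofReal_le_ofReal hcard'

end CoveringRadiusOfSample

lemma div_log_mul_exp_neg_le {x a : ℝ} (hx : 2 ≤ x) (ha : 0 ≤ a) :
    x / Real.log x * Real.exp (-((a + 1) * Real.log x)) ≤
      (Real.log x / x) ^ a / Real.log 2 ^ (a + 1) := by
  have hx0 : 0 < x := by linarith
  have hlog : Real.log 2 ≤ Real.log x := Real.log_le_log two_pos hx
  have hlog2 : 0 < Real.log 2 := Real.log_pos one_lt_two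
  have hlogx : 0 < Real.log x := by linarith
  have hexp : Real.exp (-((a + 1) * Real.log x)) = (x ^ a * x)⁻¹ := by
    rw [Real.exp_neg, mul_comm, ← Real.rpow_def_of_pos hx0, Real.rpow_add_one hx0.ne']
  calc x / Real.log x * Real.exp (-((a + 1) * Real.log x))
      = (Real.log x / x) ^ a / Real.log x ^ (a + 1) := by
        rw [hexp, Real.div_rpow (by linarith) hx0.le, Real.rpow_add_one (by linarith)]
        field_simp
    _ ≤ (Real.log x / x) ^ a / Real.log 2 ^ (a + 1) := by gcongr

lemma rpow_add_mul_exp_le_of_pow_eq {d : ℕ} (hd : d ≠ 0) {α c K B x r : ℝ} (hα : 0 ≤ α)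
    (hc : 0 < c) (hK : c * K = α / d + 1) (hB : 0 ≤ B) (hx : 2 ≤ x) (hr : 0 ≤ r)
    (hrd : r ^ d = K * Real.log x / x) :
    (2 * r) ^ α + B * (2 ^ d / (c * r ^ d)) * Real.exp (-(x * (c * r ^ d))) ≤
      (2 ^ α * K ^ (α / d) + B * 2 ^ d / ((α / d + 1) * Real.log 2 ^ (α / d + 1))) *
        (Real.log x / x) ^ (α / d) := by
  set a := α / d
  have hlog : 0 < Real.log x := Real.log_pos (by linarith)
  have hK0 : 0 < K := pos_of_mul_pos_right (by rw [hK]; positivity) hc.le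
  have hr_pow : (2 * r) ^ α = 2 ^ α * K ^ a * (Real.log x / x) ^ a := by
    rw [Real.mul_rpow zero_le_two hr, mul_assoc, ← Real.mul_rpow hK0.le (by positivity),
      ← mul_div_assoc, ← hrd, ← Real.rpow_natCast, ← Real.rpow_mul hr,
      mul_div_cancel₀ _ (by exact_mod_cast hd)]
  have hfail : 2 ^ d / (c * r ^ d) * Real.exp (-(x * (c * r ^ d))) =
      2 ^ d / (a + 1) * (x / Real.log x * Real.exp (-((a + 1) * Real.log x))) := by
    have hcr : c * r ^ d = (a + 1) * Real.log x / x := by rw [hrd, ← hK]; ring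
    rw [hcr, mul_div_cancel₀ _ (by linarith)]
    field_simp
  rw [hr_pow, mul_assoc B, hfail]
  calc 2 ^ α * K ^ a * (Real.log x / x) ^ a +
        B * (2 ^ d / (a + 1) * (x / Real.log x * Real.exp (-((a + 1) * Real.log x))))
      ≤ 2 ^ α * K ^ a * (Real.log x / x) ^ a +
        B * (2 ^ d / (a + 1) * ((Real.log x / x) ^ a / Real.log 2 ^ (a + 1))) := by
        gcongr
        exact div_log_mul_exp_neg_le hx (by positivity)
    _ = _ := by field_simp

theorem expected_covering_radius_upper_bound_general
    {Ω : Type*} [MeasurableSpace Ω] (Pr : Measure Ω) [IsProbabilityMeasure Pr]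
    {M : Type*} [MetricSpace M] [CompactSpace M] [MeasurableSpace M] [BorelSpace M]
    (d : ℕ) (hd : 0 < d) (α : ℝ) (hα : 0 < α)
    (ν : Measure M) [IsProbabilityMeasure ν]
    (c₀ : ℝ) (hc₀ : 0 < c₀)
    (hlower : ∀ (x : M) (r : ℝ), 0 < r → r < diam (Set.univ : Set M) →
      c₀ * r ^ d ≤ (ν (ball x r)).toReal)
    (X : ℕ → Ω → M) (hXmeas : ∀ i, Measurable (X i))
    (hXlaw : ∀ i, Measure.map (X i) Pr = ν)
    (hXindep : iIndepFun X Pr) :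
    ∃ C : ℝ, 0 < C ∧ ∀ n : ℕ, 2 ≤ n →
      ∫⁻ ω, ENNReal.ofReal ((⨆ x : M, infDist x ((fun i => X i ω) '' Set.Iio n)) ^ α) ∂Pr
        ≤ ENNReal.ofReal (C * (Real.log n / n) ^ (α / d)) := by
  set a := α / d
  set K := (a + 1) / c₀
  refine ⟨2 ^ α * K ^ a + diam (univ : Set M) ^ α * 2 ^ d / ((a + 1) * Real.log 2 ^ (a + 1)),
    by positivity, fun n hn => ?_⟩
  have hn : (2 : ℝ) ≤ n := by exact_mod_cast hn
  have ht : 0 < K * Real.log n / n := by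
    have := Real.log_pos (by linarith : (1 : ℝ) < n)
    positivity
  refine (lintegral_coveringRadius_rpow_le hα.le hc₀ hlower hXmeas hXlaw hXindep n
    (Real.rpow_pos_of_pos ht (d⁻¹ : ℝ))).trans (ENNReal.ofReal_le_ofReal ?_)
  exact rpow_add_mul_exp_le_of_pow_eq hd.ne' hα.le hc₀ (mul_div_cancel₀ _ hc₀.ne')
    (by positivity) hn (by positivity) (Real.rpow_inv_natCast_pow ht.le hd.ne')

/-- the `α`-th moment of the covering radius of `n` i.i.d. points whose
law satisfies a lower Ahlfors bound is at most `C · (log n / n)^{α/d}`. -/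
theorem expected_covering_radius_upper_bound
    {Ω : Type*} [MeasurableSpace Ω] (Pr : Measure Ω) [IsProbabilityMeasure Pr]
    {M : Type*} [MetricSpace M] [CompactSpace M] [MeasurableSpace M] [BorelSpace M]
    (d : ℕ) (hd : 0 < d) (α : ℝ) (hα : 0 < α)
    (hdiam : 0 < diam (Set.univ : Set M))
    (ν : Measure M) [IsProbabilityMeasure ν]
    (c₀ : ℝ) (hc₀ : 0 < c₀)
    (hlower : ∀ (x : M) (r : ℝ), 0 < r → r < diam (Set.univ : Set M) →
      c₀ * r ^ d ≤ (ν (ball x r)).toReal)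
    (X : ℕ → Ω → M) (hXmeas : ∀ i, Measurable (X i))
    (hXlaw : ∀ i, Measure.map (X i) Pr = ν)
    (hXindep : iIndepFun X Pr) :
    ∃ C : ℝ, 0 < C ∧ ∀ n : ℕ, 2 ≤ n →
      ∫⁻ ω, ENNReal.ofReal ((⨆ x : M, infDist x ((fun i => X i ω) '' Set.Iio n)) ^ α) ∂Pr
        ≤ ENNReal.ofReal (C * (Real.log n / n) ^ (α / d)) :=
  expected_covering_radius_upper_bound_general Pr d hd α hα ν c₀ hc₀ hlower X hXmeas hXlaw hXindep
end

section
/- Let d be a positive integer and γ ∈ (0, ∞), α ∈ (0, ∞). Let (M, dist) be a compact metric space with at least two points and let vol be a finite Borel measure on M with vol(M) > 0 satisfying the uniform volume-density condition: sup_{p∈M} |vol(B(p,r))/(ω_d r^d) − 1| → 0 as r → 0+. Let X_1, X_2, … be i.i.d. random variables with law vol/vol(M) and set P_n = {X_1, …, X_n}. Then there exist constants 0 < c ≤ C such that for every positive integer n: c·n^{−α/d} ≤ E[ ( ∫_M dist(x, P_n)^γ dvol(x) )^{α/γ} ] ≤ C·n^{−α/d}. -/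
/-!
Write `A_n(ω) = ∫ dist(x, P_n)^γ dvol(x)`. By the density condition `vol(B(p,r)) ≍ ω_d r^d` for
small `r`. Lower bound: `n` balls of radius `t ≍ n^{-1/d}` cover at most half of `vol(M)`, so
`A_n ≥ t^γ vol(M)/2` for every configuration of `n` points. Upper bound: compactness extends
`vol(B(x,r)) ≳ r^d` to all `r ≤ diam M`, so independence gives
`P(dist(x, P_n) ≥ t) ≤ exp(-κ n t^d)`; the layer-cake formula and a Gamma integral turn this into
`E dist(x, P_n)^s ≲ n^{-s/d}`. Fubini then bounds `E A_n^{α/γ}`, through Jensen's inequality in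
`ω` if `α ≤ γ` and Hölder's inequality in `x` if `γ ≤ α`.
-/

open MeasureTheory Metric ProbabilityTheory

open Set
open scoped ENNReal

lemma measurable_infDist_image {δ M : Type*} [MeasurableSpace δ] [MetricSpace M]
    [MeasurableSpace M] [OpensMeasurableSpace M] [SecondCountableTopology M]
    {x : δ → M} {f : ℕ → δ → M} (hx : Measurable x) (hf : ∀ i, Measurable (f i)) (s : Set ℕ) :
    Measurable fun a => infDist (x a) ((fun i => f i a) '' s) := by
  simp only [infDist, infEDist, iInf_image]
  exact (Measurable.biInf s s.to_countable fun i _ => hx.edist (hf i)).ennreal_toReal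

lemma lintegral_rpow_rpow_le {α : Type*} [MeasurableSpace α] (μ : Measure α) {f : α → ℝ≥0∞}
    (hf : AEMeasurable f μ) {p q : ℝ} (hp : 0 < p) (hpq : p ≤ q) :
    (∫⁻ a, f a ^ p ∂μ) ^ (q / p) ≤ μ univ ^ (q / p - 1) * ∫⁻ a, f a ^ q ∂μ := by
  have hq : 0 < q := hp.trans_le hpq
  have h := eLpNorm'_le_eLpNorm'_mul_rpow_measure_univ hp hpq hf.aestronglyMeasurable
  simp only [eLpNorm'_eq_lintegral_enorm, enorm_eq_self] at h
  calc (∫⁻ a, f a ^ p ∂μ) ^ (q / p) = ((∫⁻ a, f a ^ p ∂μ) ^ (1 / p)) ^ q := by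
        rw [← ENNReal.rpow_mul, one_div_mul_eq_div]
    _ ≤ ((∫⁻ a, f a ^ q ∂μ) ^ (1 / q) * μ univ ^ (1 / p - 1 / q)) ^ q :=
        ENNReal.rpow_le_rpow h hq.le
    _ = μ univ ^ (q / p - 1) * ∫⁻ a, f a ^ q ∂μ := by
        rw [ENNReal.mul_rpow_of_nonneg _ _ hq.le, ← ENNReal.rpow_mul, ← ENNReal.rpow_mul,
          one_div_mul_cancel hq.ne', ENNReal.rpow_one, mul_comm]
        congr 2
        field_simp

section Moments

variable {Ω M : Type*} [MeasurableSpace Ω] [MeasurableSpace M] (Pr : Measure Ω)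
  (vol : Measure M) [SFinite vol] {f : M → Ω → ℝ≥0∞} {γ α : ℝ} {ε a b : ℝ≥0∞}

lemma lintegral_lintegral_swap_rpow [SFinite Pr] (hf : Measurable (Function.uncurry f)) (s : ℝ) :
    ∫⁻ ω, ∫⁻ x, f x ω ^ s ∂vol ∂Pr = ∫⁻ x, ∫⁻ ω, f x ω ^ s ∂Pr ∂vol :=
  lintegral_lintegral_swap ((hf.pow_const s).comp measurable_swap).aemeasurable

lemma lintegral_rpow_lintegral_rpow_le_of_le [IsProbabilityMeasure Pr]
    (hf : Measurable (Function.uncurry f)) (hγ : 0 < γ) (hα : 0 < α) (hαγ : α ≤ γ)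
    (ha : ∀ x, ∫⁻ ω, f x ω ^ γ ∂Pr ≤ a * ε ^ γ) :
    ∫⁻ ω, (∫⁻ x, f x ω ^ γ ∂vol) ^ (α / γ) ∂Pr ≤ (vol univ * a) ^ (α / γ) * ε ^ α := by
  have hq : 0 < α / γ := div_pos hα hγ
  have hmeas : Measurable fun ω => ∫⁻ x, f x ω ^ γ ∂vol := (hf.pow_const γ).lintegral_prod_left'
  -- Jensen's inequality in `ω` for the concave power `α / γ ≤ 1`
  have hjensen := lintegral_rpow_rpow_le Pr hmeas.aemeasurable hq ((div_le_one hγ).2 hαγ)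
  simp only [measure_univ, ENNReal.one_rpow, one_mul, ENNReal.rpow_one] at hjensen
  calc ∫⁻ ω, (∫⁻ x, f x ω ^ γ ∂vol) ^ (α / γ) ∂Pr
      = ((∫⁻ ω, (∫⁻ x, f x ω ^ γ ∂vol) ^ (α / γ) ∂Pr) ^ (1 / (α / γ))) ^ (α / γ) := by
        rw [← ENNReal.rpow_mul, one_div_mul_cancel hq.ne', ENNReal.rpow_one]
    _ ≤ (∫⁻ x, ∫⁻ ω, f x ω ^ γ ∂Pr ∂vol) ^ (α / γ) := by
        rw [← lintegral_lintegral_swap_rpow Pr vol hf γ]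
        gcongr
    _ ≤ (vol univ * (a * ε ^ γ)) ^ (α / γ) := by
        gcongr
        exact (lintegral_mono ha).trans_eq (lintegral_const _) |>.trans_eq (mul_comm _ _)
    _ = (vol univ * a) ^ (α / γ) * ε ^ α := by
        rw [← mul_assoc, ENNReal.mul_rpow_of_nonneg _ _ hq.le, ← ENNReal.rpow_mul]
        congr 2
        field_simp

lemma lintegral_rpow_lintegral_rpow_le_of_ge [SFinite Pr] (hf : Measurable (Function.uncurry f))
    (hγ : 0 < γ) (hγα : γ ≤ α) (hb : ∀ x, ∫⁻ ω, f x ω ^ α ∂Pr ≤ b * ε ^ α) :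
    ∫⁻ ω, (∫⁻ x, f x ω ^ γ ∂vol) ^ (α / γ) ∂Pr ≤ vol univ ^ (α / γ) * b * ε ^ α := by
  have hq1 : 0 ≤ α / γ - 1 := sub_nonneg.2 ((one_le_div hγ).2 hγα)
  have hpow := ENNReal.rpow_add_of_nonneg (x := vol univ) _ _ hq1 zero_le_one
  rw [sub_add_cancel, ENNReal.rpow_one] at hpow
  calc ∫⁻ ω, (∫⁻ x, f x ω ^ γ ∂vol) ^ (α / γ) ∂Pr
      ≤ ∫⁻ ω, vol univ ^ (α / γ - 1) * ∫⁻ x, f x ω ^ α ∂vol ∂Pr := by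
        refine lintegral_mono fun ω => ?_
        -- Hölder's inequality in `x` for the convex power `α / γ ≥ 1`
        have hfω : Measurable fun x => f x ω := hf.comp measurable_prodMk_right
        have := lintegral_rpow_rpow_le vol hfω.aemeasurable hγ hγα
        simpa only [← ENNReal.rpow_mul, div_mul_cancel₀ α hγ.ne'] using this
    _ = vol univ ^ (α / γ - 1) * ∫⁻ x, ∫⁻ ω, f x ω ^ α ∂Pr ∂vol := by
        have hmeas : Measurable fun ω => ∫⁻ x, f x ω ^ α ∂vol :=
          (hf.pow_const α).lintegral_prod_left'
        rw [lintegral_const_mul _ hmeas, lintegral_lintegral_swap_rpow Pr vol hf]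
    _ ≤ vol univ ^ (α / γ - 1) * (vol univ * (b * ε ^ α)) := by
        gcongr
        exact (lintegral_mono hb).trans_eq (lintegral_const _) |>.trans_eq (mul_comm _ _)
    _ = vol univ ^ (α / γ) * b * ε ^ α := by rw [← mul_assoc, ← mul_assoc, ← hpow]

lemma lintegral_rpow_lintegral_rpow_le [IsProbabilityMeasure Pr]
    (hf : Measurable (Function.uncurry f)) (hγ : 0 < γ) (hα : 0 < α)
    (ha : ∀ x, ∫⁻ ω, f x ω ^ γ ∂Pr ≤ a * ε ^ γ)
    (hb : ∀ x, ∫⁻ ω, f x ω ^ α ∂Pr ≤ b * ε ^ α) :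
    ∫⁻ ω, (∫⁻ x, f x ω ^ γ ∂vol) ^ (α / γ) ∂Pr ≤
      ((vol univ * a) ^ (α / γ) + vol univ ^ (α / γ) * b) * ε ^ α := by
  rw [add_mul]
  rcases le_total α γ with hαγ | hγα
  · exact le_add_right (lintegral_rpow_lintegral_rpow_le_of_le Pr vol hf hγ hα hαγ ha)
  · exact le_add_left (lintegral_rpow_lintegral_rpow_le_of_ge Pr vol hf hγ hγα hb)

end Moments

lemma lintegral_ofReal_rpow_le_of_measure_le_exp {α : Type*} [MeasurableSpace α] {μ : Measure α}
    {Z : α → ℝ} (hZ0 : 0 ≤ Z) (hZ : AEMeasurable Z μ) {β b p : ℝ} (hβ : 0 < β) (hb : 0 < b)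
    (hp : 0 < p) (htail : ∀ t, 0 < t → μ {a | t ≤ Z a} ≤ ENNReal.ofReal (Real.exp (-b * t ^ p))) :
    ∫⁻ a, ENNReal.ofReal (Z a ^ β) ∂μ ≤
      ENNReal.ofReal (β * (b ^ (-β / p) * (1 / p) * Real.Gamma (β / p))) := by
  have hint := integrableOn_rpow_mul_exp_neg_mul_rpow (s := β - 1) (by linarith) hp hb
  have hval := integral_rpow_mul_exp_neg_mul_rpow hp (q := β - 1) (by linarith) hb
  rw [sub_add_cancel] at hval
  rw [lintegral_rpow_eq_lintegral_meas_le_mul μ (Filter.Eventually.of_forall hZ0) hZ hβ,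
    ENNReal.ofReal_mul hβ.le, ← hval, ofReal_integral_eq_lintegral_ofReal hint
      ((ae_restrict_iff' measurableSet_Ioi).2 (Filter.Eventually.of_forall fun t ht =>
        by have := ht.out; positivity))]
  gcongr 1
  refine setLIntegral_mono (by fun_prop) fun t ht => ?_
  rw [ENNReal.ofReal_mul (Real.rpow_nonneg (le_of_lt ht) _), mul_comm]
  gcongr
  exact htail t ht

lemma le_and_le_of_abs_div_sub_one_le {a b ε : ℝ} (hb : 0 < b) (h : |a / b - 1| ≤ ε) :
    (1 - ε) * b ≤ a ∧ a ≤ (1 + ε) * b := by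
  rw [abs_le, le_sub_iff_add_le, sub_le_iff_le_add, le_div_iff₀ hb, div_le_iff₀ hb] at h
  constructor <;> linarith

section Metric

variable {M : Type*} [MetricSpace M] [MeasurableSpace M]

lemma measure_thickening_image_Iio_le (vol : Measure M) (f : ℕ → M) (n : ℕ) {t : ℝ}
    {K : ℝ≥0∞} (hK : ∀ i < n, vol (ball (f i) t) ≤ K) :
    vol (thickening t (f '' Iio n)) ≤ n * K := by
  rw [thickening_eq_biUnion_ball, biUnion_image, ← Finset.coe_range]
  calc vol (⋃ i ∈ (Finset.range n : Set ℕ), ball (f i) t)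
      ≤ ∑ i ∈ Finset.range n, vol (ball (f i) t) := measure_biUnion_finset_le _ _
    _ ≤ ∑ _i ∈ Finset.range n, K := Finset.sum_le_sum fun i hi => hK i (Finset.mem_range.1 hi)
    _ = n * K := by rw [Finset.sum_const, Finset.card_range, nsmul_eq_mul]

lemma exists_mul_pow_le_measureReal_ball [CompactSpace M] (vol : Measure M) [IsFiniteMeasure vol]
    {d : ℕ} {c r₀ : ℝ} (hc : 0 < c) (hr₀ : 0 < r₀)
    (h : ∀ r, 0 < r → r < r₀ → ∀ p, c * r ^ d ≤ vol.real (ball p r)) :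
    ∃ κ > 0, ∀ r, 0 < r → r ≤ diam (univ : Set M) → ∀ p, κ * r ^ d ≤ vol.real (ball p r) := by
  set D := diam (univ : Set M)
  have hD : 0 ≤ D := diam_nonneg
  -- shrinking radii by the fixed factor `ρ` brings every `r ≤ D` below `r₀`
  set ρ := r₀ / (2 * (r₀ + D))
  have hρ : 0 < ρ := by positivity
  have hρ_half : ρ ≤ 1 / 2 := by
    rw [div_le_iff₀ (by positivity)]; linarith
  refine ⟨c * ρ ^ d, by positivity, fun r hr hrD p => ?_⟩
  have hρr₀ : ρ * r < r₀ := calc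
    ρ * r ≤ ρ * D := by gcongr
    _ = r₀ * (D / (2 * (r₀ + D))) := by ring
    _ < r₀ * 1 := by gcongr; rw [div_lt_one (by positivity)]; linarith
    _ = r₀ := mul_one r₀
  calc c * ρ ^ d * r ^ d = c * (ρ * r) ^ d := by ring
    _ ≤ vol.real (ball p (ρ * r)) := h _ (by positivity) hρr₀ p
    _ ≤ vol.real (ball p r) := measureReal_mono (ball_subset_ball (by nlinarith))

variable [OpensMeasurableSpace M]

lemma ofReal_half_le_measure_compl_thickening_image_Iio (vol : Measure M) [IsFiniteMeasure vol]
    (f : ℕ → M) (n : ℕ) {t B : ℝ}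
    (hB : ∀ i < n, vol.real (ball (f i) t) ≤ B) (hnB : n * B ≤ vol.real univ / 2) :
    ENNReal.ofReal (vol.real univ / 2) ≤ vol (thickening t (f '' Iio n))ᶜ := by
  have hthick : vol (thickening t (f '' Iio n)) ≤ ENNReal.ofReal (vol.real univ / 2) := calc
    vol (thickening t (f '' Iio n)) ≤ n * ENNReal.ofReal B :=
        measure_thickening_image_Iio_le vol f n fun i hi => by
          rw [← ofReal_measureReal (measure_ne_top _ _)]
          exact ENNReal.ofReal_le_ofReal (hB i hi)
    _ = ENNReal.ofReal (n * B) := by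
        rw [ENNReal.ofReal_mul (Nat.cast_nonneg _), ENNReal.ofReal_natCast]
    _ ≤ ENNReal.ofReal (vol.real univ / 2) := ENNReal.ofReal_le_ofReal hnB
  calc ENNReal.ofReal (vol.real univ / 2)
      = ENNReal.ofReal (vol.real univ) - ENNReal.ofReal (vol.real univ / 2) := by
        rw [← ENNReal.ofReal_sub _ (by positivity), sub_half]
    _ ≤ vol univ - vol (thickening t (f '' Iio n)) := by
        rw [ofReal_measureReal (measure_ne_top _ _)]
        gcongr
    _ = vol (thickening t (f '' Iio n))ᶜ :=
        (measure_compl isOpen_thickening.measurableSet (measure_ne_top _ _)).symm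

lemma ofReal_rpow_mul_measure_compl_thickening_le (vol : Measure M) {S : Set M}
    (hS : S.Nonempty) {t γ : ℝ} (hγ : 0 ≤ γ) :
    ENNReal.ofReal t ^ γ * vol (thickening t S)ᶜ ≤ ∫⁻ x, ENNReal.ofReal (infDist x S) ^ γ ∂vol :=
  calc ENNReal.ofReal t ^ γ * vol (thickening t S)ᶜ
      = ∫⁻ _ in (thickening t S)ᶜ, ENNReal.ofReal t ^ γ ∂vol := (setLIntegral_const _ _).symm
    _ ≤ ∫⁻ x in (thickening t S)ᶜ, ENNReal.ofReal (infDist x S) ^ γ ∂vol := by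
        refine setLIntegral_mono (by fun_prop) fun x hx => ?_
        rw [mem_compl_iff, mem_thickening_iff_infDist_lt hS, not_lt] at hx
        gcongr
    _ ≤ ∫⁻ x, ENNReal.ofReal (infDist x S) ^ γ ∂vol := setLIntegral_le_lintegral _ _

lemma exists_le_lintegral_infDist_rpow (vol : Measure M) [IsFiniteMeasure vol]
    (hvol : 0 < vol univ) {d : ℕ} (hd : 0 < d) {K r₀ γ α : ℝ} (hK : 0 < K) (hr₀ : 0 < r₀)
    (hγ : 0 < γ) (hα : 0 < α)
    (hball : ∀ r, 0 < r → r < r₀ → ∀ p, vol.real (ball p r) ≤ K * r ^ d) :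
    ∃ c > 0, ∀ n : ℕ, 0 < n → ∀ f : ℕ → M, ENNReal.ofReal (c * (n : ℝ) ^ (-α / d)) ≤
      (∫⁻ x, ENNReal.ofReal (infDist x (f '' Iio n)) ^ γ ∂vol) ^ (α / γ) := by
  set V := vol.real univ
  have hV : 0 < V := ENNReal.toReal_pos hvol.ne' (measure_ne_top _ _)
  -- `n` balls of radius `s₀ n^{-1/d}` cover at most half of `M`
  set s₀ := min (r₀ / 2) ((V / (2 * K)) ^ (d : ℝ)⁻¹)
  have hs₀ : 0 < s₀ := by positivity
  refine ⟨s₀ ^ α * (V / 2) ^ (α / γ), by positivity, fun n hn f => ?_⟩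
  have hnR : (0 : ℝ) < n := Nat.cast_pos.2 hn
  set t := s₀ * (n : ℝ) ^ (-(d : ℝ)⁻¹)
  have hscale : (n : ℝ) ^ (-(d : ℝ)⁻¹) ≤ 1 :=
    Real.rpow_le_one_of_one_le_of_nonpos (by exact_mod_cast hn) (by simp)
  have htr₀ : t < r₀ := calc
    t ≤ s₀ := mul_le_of_le_one_right hs₀.le hscale
    _ ≤ r₀ / 2 := min_le_left _ _
    _ < r₀ := half_lt_self hr₀
  have hnt : (n : ℝ) * (K * t ^ d) ≤ V / 2 := calc
    (n : ℝ) * (K * t ^ d) = K * s₀ ^ d * ((n : ℝ) * ((n : ℝ) ^ (-(d : ℝ)⁻¹)) ^ d) := by ring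
    _ = K * s₀ ^ d := by
        rw [← Real.rpow_natCast ((n : ℝ) ^ _), ← Real.rpow_mul hnR.le, neg_mul,
          inv_mul_cancel₀ (by positivity), Real.rpow_neg_one, mul_inv_cancel₀ hnR.ne', mul_one]
    _ ≤ K * (V / (2 * K)) := by
        gcongr
        calc s₀ ^ d ≤ ((V / (2 * K)) ^ (d : ℝ)⁻¹) ^ d := by gcongr; exact min_le_right _ _
          _ = V / (2 * K) := Real.rpow_inv_natCast_pow (by positivity) hd.ne'
    _ = V / 2 := by field_simp
  have hcompl := ofReal_half_le_measure_compl_thickening_image_Iio vol f n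
    (fun i _ => hball t (by positivity) htr₀ (f i)) hnt
  calc ENNReal.ofReal (s₀ ^ α * (V / 2) ^ (α / γ) * (n : ℝ) ^ (-α / d))
      = (ENNReal.ofReal t ^ γ * ENNReal.ofReal (V / 2)) ^ (α / γ) := by
        have ht : 0 ≤ t := by positivity
        rw [ENNReal.ofReal_rpow_of_nonneg ht hγ.le, ← ENNReal.ofReal_mul (by positivity),
          ENNReal.ofReal_rpow_of_nonneg (by positivity) (by positivity),
          Real.mul_rpow (by positivity) (by positivity), ← Real.rpow_mul ht,
          mul_div_cancel₀ _ hγ.ne', Real.mul_rpow hs₀.le (by positivity), ← Real.rpow_mul hnR.le]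
        ring_nf
    _ ≤ (ENNReal.ofReal t ^ γ * vol (thickening t (f '' Iio n))ᶜ) ^ (α / γ) := by gcongr
    _ ≤ _ := by
        gcongr
        exact ofReal_rpow_mul_measure_compl_thickening_le vol
          ((show (Iio n).Nonempty from ⟨0, hn⟩).image f) hγ.le

end Metric

lemma ofReal_div_le_measure_preimage {Ω M : Type*} [MeasurableSpace Ω] [MeasurableSpace M]
    {Pr : Measure Ω} {vol : Measure M} [IsFiniteMeasure vol] {X : Ω → M} (hX : Measurable X)
    (hlaw : Pr.map X = (vol univ)⁻¹ • vol) (hvol : vol univ ≠ 0) {s : Set M}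
    (hs : MeasurableSet s) {m : ℝ} (hm : m ≤ vol.real s) :
    ENNReal.ofReal (m / vol.real univ) ≤ Pr (X ⁻¹' s) := by
  rw [← Measure.map_apply hX hs, hlaw, Measure.smul_apply, smul_eq_mul, mul_comm,
    ← div_eq_mul_inv, ENNReal.ofReal_le_iff_le_toReal (ENNReal.div_ne_top (by finiteness) hvol),
    ENNReal.toReal_div]
  exact div_le_div_of_nonneg_right hm ENNReal.toReal_nonneg

section Sample

variable {Ω M : Type*} [MeasurableSpace Ω] {Pr : Measure Ω} [IsProbabilityMeasure Pr]
  [MetricSpace M] [MeasurableSpace M] [OpensMeasurableSpace M] {X : ℕ → Ω → M}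

lemma measure_le_infDist_le_exp (hX : ∀ i, Measurable (X i)) (hind : iIndepFun X Pr) {x : M}
    {t m : ℝ} (hm0 : 0 ≤ m) (hm : ∀ i, ENNReal.ofReal m ≤ Pr (X i ⁻¹' ball x t)) (n : ℕ) :
    Pr {ω | t ≤ infDist x ((fun i => X i ω) '' Iio n)} ≤
      ENNReal.ofReal (Real.exp (-(n * m))) := by
  have hsub : {ω | t ≤ infDist x ((fun i => X i ω) '' Iio n)} ⊆
      ⋂ i ∈ Finset.range n, X i ⁻¹' (ball x t)ᶜ := by
    intro ω hω
    simp only [mem_iInter, Finset.mem_range, mem_preimage, mem_compl_iff, mem_ball, not_lt]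
    intro i hi
    rw [dist_comm]
    exact hω.out.trans (infDist_le_dist_of_mem ⟨i, hi, rfl⟩)
  have hmiss : ∀ i, Pr (X i ⁻¹' (ball x t)ᶜ) ≤ ENNReal.ofReal (Real.exp (-m)) := fun i => calc
    Pr (X i ⁻¹' (ball x t)ᶜ) = 1 - Pr (X i ⁻¹' ball x t) := by
        rw [preimage_compl, prob_compl_eq_one_sub (hX i measurableSet_ball)]
    _ ≤ 1 - ENNReal.ofReal m := tsub_le_tsub_left (hm i) _
    _ = ENNReal.ofReal (1 - m) := by rw [ENNReal.ofReal_sub _ hm0, ENNReal.ofReal_one]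
    _ ≤ ENNReal.ofReal (Real.exp (-m)) :=
        ENNReal.ofReal_le_ofReal (by linarith [Real.add_one_le_exp (-m)])
  calc Pr {ω | t ≤ infDist x ((fun i => X i ω) '' Iio n)}
      ≤ Pr (⋂ i ∈ Finset.range n, X i ⁻¹' (ball x t)ᶜ) := measure_mono hsub
    _ = ∏ i ∈ Finset.range n, Pr (X i ⁻¹' (ball x t)ᶜ) :=
        hind.meas_biInter fun i _ => ⟨(ball x t)ᶜ, measurableSet_ball.compl, rfl⟩
    _ ≤ ∏ _i ∈ Finset.range n, ENNReal.ofReal (Real.exp (-m)) :=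
        Finset.prod_le_prod' fun i _ => hmiss i
    _ = ENNReal.ofReal (Real.exp (-(n * m))) := by
        rw [Finset.prod_const, Finset.card_range, ← ENNReal.ofReal_pow (Real.exp_nonneg _),
          ← Real.exp_nat_mul, mul_neg]

variable [CompactSpace M]

lemma lintegral_ofReal_infDist_rpow_le [SecondCountableTopology M] (hX : ∀ i, Measurable (X i))
    (hind : iIndepFun X Pr) {κ : ℝ} (hκ : 0 < κ) {d : ℕ} (hd : 0 < d)
    (hhit : ∀ x r, 0 < r → r ≤ diam (univ : Set M) → ∀ i,
      ENNReal.ofReal (κ * r ^ d) ≤ Pr (X i ⁻¹' ball x r))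
    {s : ℝ} (hs : 0 < s) {n : ℕ} (hn : 0 < n) (x : M) :
    ∫⁻ ω, ENNReal.ofReal (infDist x ((fun i => X i ω) '' Iio n)) ^ s ∂Pr ≤
      ENNReal.ofReal (s * (κ ^ (-s / d) * (1 / d) * Real.Gamma (s / d))) *
        ENNReal.ofReal ((n : ℝ) ^ (-(d : ℝ)⁻¹)) ^ s := by
  have hnR : (0 : ℝ) < n := Nat.cast_pos.2 hn
  have htail : ∀ t, 0 < t → Pr {ω | t ≤ infDist x ((fun i => X i ω) '' Iio n)} ≤
      ENNReal.ofReal (Real.exp (-(n * κ) * t ^ (d : ℝ))) := by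
    intro t ht
    rw [Real.rpow_natCast, neg_mul, mul_assoc]
    rcases le_or_gt t (diam (univ : Set M)) with htD | htD
    · exact measure_le_infDist_le_exp hX hind (by positivity) (hhit x t ht htD) n
    · have hempty : {ω | t ≤ infDist x ((fun i => X i ω) '' Iio n)} = ∅ := by
        refine eq_empty_of_forall_notMem fun ω hω => htD.not_ge (hω.out.trans ?_)
        exact (infDist_le_dist_of_mem (mem_image_of_mem _ (show 0 ∈ Iio n from hn))).trans
          (dist_le_diam_of_mem isBounded_of_compactSpace (mem_univ _) (mem_univ _))
      simp [hempty]
  have hmeas : Measurable fun ω => infDist x ((fun i => X i ω) '' Iio n) :=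
    measurable_infDist_image measurable_const hX _
  calc ∫⁻ ω, ENNReal.ofReal (infDist x ((fun i => X i ω) '' Iio n)) ^ s ∂Pr
      = ∫⁻ ω, ENNReal.ofReal (infDist x ((fun i => X i ω) '' Iio n) ^ s) ∂Pr :=
        lintegral_congr fun ω => ENNReal.ofReal_rpow_of_nonneg infDist_nonneg hs.le
    _ ≤ ENNReal.ofReal (s * ((n * κ) ^ (-s / d) * (1 / d) * Real.Gamma (s / d))) :=
        lintegral_ofReal_rpow_le_of_measure_le_exp (fun ω => infDist_nonneg)
          hmeas.aemeasurable hs (by positivity) (by positivity) htail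
    _ = _ := by
        rw [ENNReal.ofReal_rpow_of_nonneg (by positivity) hs.le, ← ENNReal.ofReal_mul
          (by positivity), ← Real.rpow_mul hnR.le, Real.mul_rpow hnR.le hκ.le]
        congr 1
        ring_nf

lemma exists_lintegral_rpow_lintegral_infDist_rpow_le [SecondCountableTopology M]
    (hX : ∀ i, Measurable (X i)) (hind : iIndepFun X Pr) {κ : ℝ} (hκ : 0 < κ) {d : ℕ}
    (hd : 0 < d) (hhit : ∀ x r, 0 < r → r ≤ diam (univ : Set M) → ∀ i,
      ENNReal.ofReal (κ * r ^ d) ≤ Pr (X i ⁻¹' ball x r))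
    (vol : Measure M) [IsFiniteMeasure vol] {γ α : ℝ} (hγ : 0 < γ) (hα : 0 < α) :
    ∃ C, ∀ n : ℕ, 0 < n →
      ∫⁻ ω, (∫⁻ x, ENNReal.ofReal (infDist x ((fun i => X i ω) '' Iio n)) ^ γ ∂vol) ^ (α / γ)
        ∂Pr ≤ ENNReal.ofReal (C * (n : ℝ) ^ (-α / d)) := by
  set C : ℝ≥0∞ :=
    (vol univ * ENNReal.ofReal (γ * (κ ^ (-γ / d) * (1 / d) * Real.Gamma (γ / d)))) ^ (α / γ) +
      vol univ ^ (α / γ) * ENNReal.ofReal (α * (κ ^ (-α / d) * (1 / d) * Real.Gamma (α / d)))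
  have hC : C ≠ ⊤ := by finiteness
  refine ⟨C.toReal, fun n hn => ?_⟩
  have hf : Measurable (Function.uncurry fun x ω =>
      ENNReal.ofReal (infDist x ((fun i => X i ω) '' Iio n))) :=
    (measurable_infDist_image measurable_fst (fun i => (hX i).comp measurable_snd) _).ennreal_ofReal
  calc _ ≤ C * ENNReal.ofReal ((n : ℝ) ^ (-(d : ℝ)⁻¹)) ^ α :=
        lintegral_rpow_lintegral_rpow_le Pr vol hf hγ hα
          (lintegral_ofReal_infDist_rpow_le hX hind hκ hd hhit hγ hn)
          (lintegral_ofReal_infDist_rpow_le hX hind hκ hd hhit hα hn)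
    _ = ENNReal.ofReal (C.toReal * (n : ℝ) ^ (-α / d)) := by
        rw [ENNReal.ofReal_mul ENNReal.toReal_nonneg, ENNReal.ofReal_toReal hC,
          ENNReal.ofReal_rpow_of_nonneg (by positivity) hα.le, ← Real.rpow_mul (Nat.cast_nonneg _)]
        ring_nf

end Sample

lemma ofReal_integral_rpow_rpow_eq {M : Type*} [TopologicalSpace M] [CompactSpace M]
    [MeasurableSpace M] [OpensMeasurableSpace M] (vol : Measure M) [IsFiniteMeasure vol]
    {g : M → ℝ} (hg : Continuous g) (hg0 : ∀ x, 0 ≤ g x) {γ q : ℝ} (hγ : 0 ≤ γ) (hq : 0 ≤ q) :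
    ENNReal.ofReal ((∫ x, g x ^ γ ∂vol) ^ q) = (∫⁻ x, ENNReal.ofReal (g x) ^ γ ∂vol) ^ q := by
  have hint : Integrable (fun x => g x ^ γ) vol :=
    (hg.rpow_const fun _ => Or.inr hγ).integrable_of_hasCompactSupport
      (HasCompactSupport.of_compactSpace _)
  rw [← ENNReal.ofReal_rpow_of_nonneg (integral_nonneg fun x => Real.rpow_nonneg (hg0 x) γ) hq,
    ofReal_integral_eq_lintegral_ofReal hint
      (Filter.Eventually.of_forall fun x => Real.rpow_nonneg (hg0 x) γ)]
  simp_rw [ENNReal.ofReal_rpow_of_nonneg (hg0 _) hγ]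

theorem expected_distortion_two_sided_general
    {Ω : Type*} [MeasurableSpace Ω] (Pr : Measure Ω) [IsProbabilityMeasure Pr]
    {M : Type*} [MetricSpace M] [CompactSpace M]
    [MeasurableSpace M] [BorelSpace M]
    (d : ℕ) (hd : 0 < d) (γ α : ℝ) (hγ : 0 < γ) (hα : 0 < α)
    (vol : Measure M) [IsFiniteMeasure vol] (hvolpos : 0 < vol Set.univ)
    (hdens : ∀ ε : ℝ, 0 < ε → ∃ r₀ : ℝ, 0 < r₀ ∧ ∀ r : ℝ, 0 < r → r < r₀ →
      ∀ p : M, |(vol (ball p r)).toReal / (unitBallVol d * r ^ d) - 1| ≤ ε)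
    (X : ℕ → Ω → M) (hXmeas : ∀ i, Measurable (X i))
    (hXlaw : ∀ i, Measure.map (X i) Pr = (vol Set.univ)⁻¹ • vol)
    (hXindep : iIndepFun X Pr) :
    ∃ c C : ℝ, 0 < c ∧ c ≤ C ∧ ∀ n : ℕ, 0 < n →
      ENNReal.ofReal (c * (n : ℝ) ^ (-α / d)) ≤
        (∫⁻ ω, ENNReal.ofReal
          ((∫ x, infDist x ((fun i => X i ω) '' Set.Iio n) ^ γ ∂vol) ^ (α / γ)) ∂Pr) ∧
      (∫⁻ ω, ENNReal.ofReal
          ((∫ x, infDist x ((fun i => X i ω) '' Set.Iio n) ^ γ ∂vol) ^ (α / γ)) ∂Pr)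
        ≤ ENNReal.ofReal (C * (n : ℝ) ^ (-α / d)) := by
  obtain ⟨r₀, hr₀, hdens₀⟩ := hdens (1 / 2) one_half_pos
  have hωd : 0 < unitBallVol d :=
    ENNReal.toReal_pos (measure_ball_pos volume _ one_pos).ne' measure_ball_lt_top.ne
  have hball : ∀ r, 0 < r → r < r₀ → ∀ p, unitBallVol d / 2 * r ^ d ≤ vol.real (ball p r) ∧
      vol.real (ball p r) ≤ 3 / 2 * unitBallVol d * r ^ d := fun r hr hrr p => by
    have := le_and_le_of_abs_div_sub_one_le (by positivity) (hdens₀ r hr hrr p)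
    rw [measureReal_def]
    constructor <;> linarith [this.1, this.2]
  obtain ⟨κ, hκ, hgrowth⟩ := exists_mul_pow_le_measureReal_ball vol (by positivity) hr₀
    fun r hr hrr p => (hball r hr hrr p).1
  obtain ⟨c, hc, hlower⟩ := exists_le_lintegral_infDist_rpow vol hvolpos hd (by positivity) hr₀
    hγ hα fun r hr hrr p => (hball r hr hrr p).2
  have hV : 0 < vol.real univ := ENNReal.toReal_pos hvolpos.ne' (measure_ne_top _ _)
  obtain ⟨C, hupper⟩ := exists_lintegral_rpow_lintegral_infDist_rpow_le hXmeas hXindep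
    (div_pos hκ hV) hd (fun x r hr hrD i => mul_div_right_comm κ (r ^ d) _ ▸
      ofReal_div_le_measure_preimage (hXmeas i) (hXlaw i) hvolpos.ne' measurableSet_ball
        (hgrowth r hr hrD x)) vol hγ hα
  refine ⟨c, max c C, hc, le_max_left _ _, fun n hn => ?_⟩
  simp_rw [ofReal_integral_rpow_rpow_eq vol (continuous_infDist_pt _) (fun _ => infDist_nonneg)
    hγ.le (div_pos hα hγ).le]
  constructor
  · calc ENNReal.ofReal (c * (n : ℝ) ^ (-α / d))
        = ∫⁻ _, ENNReal.ofReal (c * (n : ℝ) ^ (-α / d)) ∂Pr := by simp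
      _ ≤ _ := lintegral_mono fun ω => hlower n hn _
  · exact (hupper n hn).trans (ENNReal.ofReal_le_ofReal (by gcongr; exact le_max_right _ _))

/-- for i.i.d. points uniformly distributed with respect to a measure
satisfying the uniform volume-density condition, the moments of the `γ`-distortion
are comparable to `n^{-α/d}`. -/
theorem expected_distortion_two_sided
    {Ω : Type*} [MeasurableSpace Ω] (Pr : Measure Ω) [IsProbabilityMeasure Pr]
    {M : Type*} [MetricSpace M] [CompactSpace M] [Nontrivial M]
    [MeasurableSpace M] [BorelSpace M]
    (d : ℕ) (hd : 0 < d) (γ α : ℝ) (hγ : 0 < γ) (hα : 0 < α)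
    (vol : Measure M) [IsFiniteMeasure vol] (hvolpos : 0 < vol Set.univ)
    (hdens : ∀ ε : ℝ, 0 < ε → ∃ r₀ : ℝ, 0 < r₀ ∧ ∀ r : ℝ, 0 < r → r < r₀ →
      ∀ p : M, |(vol (ball p r)).toReal / (unitBallVol d * r ^ d) - 1| ≤ ε)
    (X : ℕ → Ω → M) (hXmeas : ∀ i, Measurable (X i))
    (hXlaw : ∀ i, Measure.map (X i) Pr = (vol Set.univ)⁻¹ • vol)
    (hXindep : iIndepFun X Pr) :
    ∃ c C : ℝ, 0 < c ∧ c ≤ C ∧ ∀ n : ℕ, 0 < n →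
      ENNReal.ofReal (c * (n : ℝ) ^ (-α / d)) ≤
        (∫⁻ ω, ENNReal.ofReal
          ((∫ x, infDist x ((fun i => X i ω) '' Set.Iio n) ^ γ ∂vol) ^ (α / γ)) ∂Pr) ∧
      (∫⁻ ω, ENNReal.ofReal
          ((∫ x, infDist x ((fun i => X i ω) '' Set.Iio n) ^ γ ∂vol) ^ (α / γ)) ∂Pr)
        ≤ ENNReal.ofReal (C * (n : ℝ) ^ (-α / d)) :=
  expected_distortion_two_sided_general Pr d hd γ α hγ hα vol hvolpos hdens X hXmeas hXlaw hXindep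
end

section
/- Let d be a positive integer. Let (M, dist) be a compact metric space with at least two points and let vol be a finite Borel measure on M satisfying the uniform volume-density condition: sup_{p∈M} |vol(B(p,r))/(ω_d r^d) − 1| → 0 as r → 0+. Let ν be a Borel probability measure on M that is absolutely continuous with respect to vol with density h ∈ L_1(vol). Then for every r > 0, for vol-almost every x ∈ M: n·ν(B(x, r·n^{−1/d})) → ω_d·r^d·h(x) as n → ∞. -/
/-!
Write `ρₙ = r n^{-1/d}`, so that `n ρₙ^d = r^d`, and split
`n ν(B(x, ρₙ)) = h(x) · n vol(B(x, ρₙ)) + n ∫_{B(x, ρₙ)} (h - h(x)) dvol`.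
The first term tends to `ω_d r^d h(x)` by the volume-density condition. The second is at most
`n vol(B(x, 2ρₙ)) · ⨍_{B̄(x, ρₙ)} |h - h(x)| dvol`; the first factor converges (to `ω_d (2r)^d`)
and the average tends to `0` at every Lebesgue point of `h`. The density condition makes `vol`
doubling, so almost every point is a Lebesgue point by the differentiation theorem.
-/

open MeasureTheory Metric Filter

open Topology
open scoped ENNReal

lemma unitBallVol_pos (d : ℕ) : 0 < unitBallVol d :=
  ENNReal.toReal_pos (measure_ball_pos _ _ one_pos).ne' measure_ball_lt_top.ne

lemma tendsto_mul_natCast_rpow_neg_div_nhdsGT {d r : ℝ} (hd : 0 < d) (hr : 0 < r) :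
    Tendsto (fun n : ℕ => r * (n : ℝ) ^ (-1 / d)) atTop (𝓝[>] 0) := by
  have hpow : Tendsto (fun n : ℕ => (n : ℝ) ^ (-1 / d)) atTop (𝓝 0) := by
    simpa only [neg_div, Function.comp_def] using
      (tendsto_rpow_neg_atTop (one_div_pos.2 hd)).comp tendsto_natCast_atTop_atTop
  refine tendsto_nhdsWithin_iff.2 ⟨by simpa using hpow.const_mul r, ?_⟩
  filter_upwards [eventually_gt_atTop 0] with n hn
  exact mul_pos hr (Real.rpow_pos_of_pos (Nat.cast_pos.2 hn) _)

lemma natCast_mul_mul_natCast_rpow_neg_div_pow {n d : ℕ} (hn : n ≠ 0) (hd : d ≠ 0) (r : ℝ) :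
    (n : ℝ) * (r * (n : ℝ) ^ (-(1 : ℝ) / d)) ^ d = r ^ d := by
  rw [mul_pow, ← Real.rpow_natCast ((n : ℝ) ^ _), ← Real.rpow_mul (Nat.cast_nonneg n),
    div_mul_cancel₀ _ (Nat.cast_ne_zero.2 hd), Real.rpow_neg_one]
  field_simp

section

variable {α E : Type*} [MeasurableSpace α] {μ : Measure α} [NormedAddCommGroup E] [NormedSpace ℝ E]
  [CompleteSpace E]

lemma norm_setIntegral_sub_measureReal_smul_le {f : α → E} {s t : Set α} (hst : s ⊆ t)
    (ht : μ t ≠ ∞) (hf : IntegrableOn f t μ) (c : E) :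
    ‖∫ y in s, f y ∂μ - μ.real s • c‖ ≤ μ.real t * ⨍ y in t, ‖f y - c‖ ∂μ := by
  have hs : μ s ≠ ∞ := ne_top_of_le_ne_top ht (measure_mono hst)
  have hfc : IntegrableOn (fun y => f y - c) t μ := hf.sub (integrableOn_const ht)
  calc ‖∫ y in s, f y ∂μ - μ.real s • c‖ = ‖∫ y in s, (f y - c) ∂μ‖ := by
        rw [integral_sub (hf.mono_set hst) (integrableOn_const hs), setIntegral_const]
    _ ≤ ∫ y in s, ‖f y - c‖ ∂μ := norm_integral_le_integral_norm _
    _ ≤ ∫ y in t, ‖f y - c‖ ∂μ :=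
        setIntegral_mono_set hfc.norm (Eventually.of_forall fun _ => norm_nonneg _)
          (Eventually.of_forall hst)
    _ = μ.real t * ⨍ y in t, ‖f y - c‖ ∂μ := (measure_smul_setAverage _ ht).symm

lemma measureReal_withDensity_ofReal {f : α → ℝ} {s : Set α} (hf : IntegrableOn f s μ)
    (hf0 : 0 ≤ᵐ[μ.restrict s] f) (hs : MeasurableSet s) :
    (μ.withDensity fun x => ENNReal.ofReal (f x)).real s = ∫ x in s, f x ∂μ := by
  rw [Measure.real, withDensity_apply _ hs,
    integral_eq_lintegral_of_nonneg_ae hf0 hf.aestronglyMeasurable]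

end

section UniformBallDensity

variable {M : Type*} [PseudoMetricSpace M] [MeasurableSpace M] {μ : Measure M} {c : ℝ} {d : ℕ}

def HasUniformBallDensity (μ : Measure M) (c : ℝ) (d : ℕ) : Prop :=
  ∀ ε : ℝ, 0 < ε → ∃ r₀ : ℝ, 0 < r₀ ∧ ∀ r : ℝ, 0 < r → r < r₀ →
    ∀ p : M, |μ.real (ball p r) / (c * r ^ d) - 1| ≤ ε

lemma HasUniformBallDensity.tendsto_measureReal_ball_div (hμ : HasUniformBallDensity μ c d)
    (p : M) : Tendsto (fun ρ => μ.real (ball p ρ) / (c * ρ ^ d)) (𝓝[>] 0) (𝓝 1) := by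
  refine Metric.tendsto_nhds.2 fun ε hε => ?_
  obtain ⟨r₀, hr₀, hball⟩ := hμ (ε / 2) (half_pos hε)
  filter_upwards [Ioo_mem_nhdsGT hr₀] with ρ ⟨hρ, hρr₀⟩
  exact (hball ρ hρ hρr₀ p).trans_lt (half_lt_self hε)

lemma HasUniformBallDensity.exists_measureReal_ball_mem_Icc (hμ : HasUniformBallDensity μ c d)
    (hc : 0 < c) : ∃ r₀ : ℝ, 0 < r₀ ∧ ∀ ρ : ℝ, 0 < ρ → ρ < r₀ → ∀ p : M,
      μ.real (ball p ρ) ∈ Set.Icc (c * ρ ^ d / 2) (3 * (c * ρ ^ d) / 2) := by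
  obtain ⟨r₀, hr₀, hball⟩ := hμ (1 / 2) one_half_pos
  refine ⟨r₀, hr₀, fun ρ hρ hρr₀ p => ?_⟩
  have hvol : 0 < c * ρ ^ d := by positivity
  obtain ⟨hlow, hup⟩ := abs_le.1 (hball ρ hρ hρr₀ p)
  constructor
  · linarith [(le_div_iff₀ hvol).1 (show 1 / 2 ≤ μ.real (ball p ρ) / (c * ρ ^ d) by linarith)]
  · linarith [(div_le_iff₀ hvol).1 (show μ.real (ball p ρ) / (c * ρ ^ d) ≤ 3 / 2 by linarith)]

lemma HasUniformBallDensity.isUnifLocDoublingMeasure [IsFiniteMeasure μ]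
    (hμ : HasUniformBallDensity μ c d) (hc : 0 < c) : IsUnifLocDoublingMeasure μ := by
  obtain ⟨r₀, hr₀, hball⟩ := hμ.exists_measureReal_ball_mem_Icc hc
  refine ⟨⟨3 * 3 ^ d, ?_⟩⟩
  filter_upwards [Ioo_mem_nhdsGT (div_pos hr₀ three_pos)] with ε ⟨hε, hεr₀⟩ x
  rw [← ENNReal.toReal_le_toReal (measure_ne_top _ _) (by finiteness), ENNReal.toReal_mul]
  push_cast
  calc μ.real (closedBall x (2 * ε)) ≤ μ.real (ball x (3 * ε)) :=
        measureReal_mono (closedBall_subset_ball (by linarith : 2 * ε < 3 * ε))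
    _ ≤ 3 * (c * (3 * ε) ^ d) / 2 := (hball _ (by positivity) (by linarith) x).2
    _ = 3 * 3 ^ d * (c * ε ^ d / 2) := by ring
    _ ≤ 3 * 3 ^ d * μ.real (ball x ε) := by gcongr; exact (hball ε hε (by linarith) x).1
    _ ≤ 3 * 3 ^ d * μ.real (closedBall x ε) :=
        mul_le_mul_of_nonneg_left (measureReal_mono ball_subset_closedBall) (by positivity)

lemma HasUniformBallDensity.tendsto_natCast_mul_measureReal_ball
    (hμ : HasUniformBallDensity μ c d) (hd : d ≠ 0) (hc : c ≠ 0) (x : M) {r : ℝ} (hr : 0 < r) :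
    Tendsto (fun n : ℕ => (n : ℝ) * μ.real (ball x (r * (n : ℝ) ^ (-(1 : ℝ) / d)))) atTop
      (𝓝 (c * r ^ d)) := by
  have hρ := tendsto_mul_natCast_rpow_neg_div_nhdsGT (Nat.cast_pos.2 (Nat.pos_of_ne_zero hd)) hr
  have hratio := ((hμ.tendsto_measureReal_ball_div x).comp hρ).const_mul (c * r ^ d)
  rw [mul_one] at hratio
  refine hratio.congr' ?_
  filter_upwards [eventually_ne_atTop 0, hρ.eventually self_mem_nhdsWithin] with n hn hρn
  have hρn' : (r * (n : ℝ) ^ (-(1 : ℝ) / d)) ^ d ≠ 0 := pow_ne_zero _ (ne_of_gt hρn)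
  rw [Function.comp_apply, ← natCast_mul_mul_natCast_rpow_neg_div_pow hn hd r]
  field_simp

lemma HasUniformBallDensity.tendsto_natCast_mul_setIntegral_ball_sub [IsFiniteMeasure μ]
    (hμ : HasUniformBallDensity μ c d) (hd : d ≠ 0) (hc : c ≠ 0) {f : M → ℝ} (hf : Integrable f μ)
    {x : M} {r : ℝ} (hr : 0 < r)
    (hx : Tendsto (fun n : ℕ => ⨍ y in closedBall x (r * (n : ℝ) ^ (-(1 : ℝ) / d)), ‖f y - f x‖ ∂μ)
      atTop (𝓝 0)) :
    Tendsto (fun n : ℕ => (n : ℝ) * (∫ y in ball x (r * (n : ℝ) ^ (-(1 : ℝ) / d)), f y ∂μ -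
      μ.real (ball x (r * (n : ℝ) ^ (-(1 : ℝ) / d))) * f x)) atTop (𝓝 0) := by
  have hρ := tendsto_mul_natCast_rpow_neg_div_nhdsGT (Nat.cast_pos.2 (Nat.pos_of_ne_zero hd)) hr
  have hbound := (hμ.tendsto_natCast_mul_measureReal_ball hd hc x (mul_pos two_pos hr)).mul hx
  rw [mul_zero] at hbound
  refine squeeze_zero_norm' ?_ hbound
  filter_upwards [hρ.eventually self_mem_nhdsWithin] with n (hρn : 0 < r * _)
  have havg : 0 ≤ ⨍ y in closedBall x (r * (n : ℝ) ^ (-(1 : ℝ) / d)), ‖f y - f x‖ ∂μ :=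
    integral_nonneg fun _ => norm_nonneg _
  set ρ := r * (n : ℝ) ^ (-(1 : ℝ) / d)
  rw [norm_mul, Real.norm_natCast, mul_assoc, mul_assoc 2 r]
  gcongr
  calc ‖∫ y in ball x ρ, f y ∂μ - μ.real (ball x ρ) * f x‖
      ≤ μ.real (closedBall x ρ) * ⨍ y in closedBall x ρ, ‖f y - f x‖ ∂μ :=
        norm_setIntegral_sub_measureReal_smul_le ball_subset_closedBall
          (measure_ne_top _ _) hf.integrableOn (f x)
    _ ≤ μ.real (ball x (2 * ρ)) * ⨍ y in closedBall x ρ, ‖f y - f x‖ ∂μ :=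
        mul_le_mul_of_nonneg_right
          (measureReal_mono (closedBall_subset_ball (by linarith)) (measure_ne_top μ _)) havg

end UniformBallDensity

theorem small_ball_probability_limit_general
    {M : Type*} [MetricSpace M] [CompactSpace M]
    [MeasurableSpace M] [BorelSpace M]
    (d : ℕ) (hd : 0 < d)
    (vol : Measure M) [IsFiniteMeasure vol]
    (hdens : ∀ ε : ℝ, 0 < ε → ∃ r₀ : ℝ, 0 < r₀ ∧ ∀ r : ℝ, 0 < r → r < r₀ →
      ∀ p : M, |(vol (ball p r)).toReal / (unitBallVol d * r ^ d) - 1| ≤ ε)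
    (ν : Measure M)
    (h : M → ℝ) (hhnonneg : ∀ x, 0 ≤ h x)
    (hhint : Integrable h vol)
    (hν : ν = vol.withDensity (fun x => ENNReal.ofReal (h x))) :
    ∀ r : ℝ, 0 < r → ∀ᵐ x ∂vol,
      Tendsto (fun n : ℕ => (n : ℝ) * (ν (ball x (r * (n : ℝ) ^ (-(1 : ℝ) / d)))).toReal)
        atTop (nhds (unitBallVol d * r ^ d * h x)) := by
  intro r hr
  have hvol : HasUniformBallDensity vol (unitBallVol d) d := hdens
  have hc := unitBallVol_pos d
  have := hvol.isUnifLocDoublingMeasure hc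
  have hρ := tendsto_mul_natCast_rpow_neg_div_nhdsGT (Nat.cast_pos.2 hd) hr
  filter_upwards [IsUnifLocDoublingMeasure.ae_tendsto_average_norm_sub vol
    hhint.locallyIntegrable 1] with x hx
  have hLebesgue := hx (fun _ => x) _ hρ <| (hρ.eventually self_mem_nhdsWithin).mono
    fun n hn => by simpa using le_of_lt hn
  have hmain := (hvol.tendsto_natCast_mul_measureReal_ball hd.ne' hc.ne' x hr).const_mul (h x)
  have herr := hvol.tendsto_natCast_mul_setIntegral_ball_sub hd.ne' hc.ne' hhint hr hLebesgue
  convert hmain.add herr using 2 with n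
  · rw [← measureReal_def, hν,
      measureReal_withDensity_ofReal hhint.integrableOn
      (ae_of_all _ hhnonneg) measurableSet_ball]
    ring
  · ring

/-- for `vol`-a.e. `x`, the blown-up small-ball probabilities
`n · ν(B(x, r n^{-1/d}))` converge to `ω_d r^d h(x)`. -/
theorem small_ball_probability_limit
    {M : Type*} [MetricSpace M] [CompactSpace M] [Nontrivial M]
    [MeasurableSpace M] [BorelSpace M]
    (d : ℕ) (hd : 0 < d)
    (vol : Measure M) [IsFiniteMeasure vol]
    (hdens : ∀ ε : ℝ, 0 < ε → ∃ r₀ : ℝ, 0 < r₀ ∧ ∀ r : ℝ, 0 < r → r < r₀ →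
      ∀ p : M, |(vol (ball p r)).toReal / (unitBallVol d * r ^ d) - 1| ≤ ε)
    (ν : Measure M) [IsProbabilityMeasure ν]
    (h : M → ℝ) (hhmeas : Measurable h) (hhnonneg : ∀ x, 0 ≤ h x)
    (hhint : Integrable h vol)
    (hν : ν = vol.withDensity (fun x => ENNReal.ofReal (h x))) :
    ∀ r : ℝ, 0 < r → ∀ᵐ x ∂vol,
      Tendsto (fun n : ℕ => (n : ℝ) * (ν (ball x (r * (n : ℝ) ^ (-(1 : ℝ) / d)))).toReal)
        atTop (nhds (unitBallVol d * r ^ d * h x)) :=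
  small_ball_probability_limit_general d hd vol hdens ν h hhnonneg hhint hν
end
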